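/- arXiv:1308.4007 — 12 statements merged into one kernel-verified Lean document; each statement's English description precedes it below -/
import Mathlib

section
/- Let a, b, c, d be positive real numbers such that ε₁a + ε₂b + ε₃c + ε₄d ≠ 0 for every choice of signs εᵢ ∈ {+1, −1}, and such that Q(a,b,c,d) admits at least one configuration. Then the image {R(V) : V a configuration of Q(a,b,c,d)} is a connected subset of ℂ. -/
/-- The uniformizer `R(V) = [v₁,v₃;v₂,v₄]` of a planar quadrilateral. -/
noncomputable def uniformizer (v₁ v₂ v₃ v₄ : ℂ) : ℂ :=
  ((v₂ - v₁) / (v₂ - v₃)) * ((v₄ - v₃) / (v₄ - v₁))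

/-- A planar configuration of the quadrilateral linkage `Q(a,b,c,d)`. -/
def IsConfig (a b c d : ℝ) (v₁ v₂ v₃ v₄ : ℂ) : Prop :=
  ‖v₂ - v₁‖ = a ∧ ‖v₃ - v₂‖ = b ∧
  ‖v₄ - v₃‖ = c ∧ ‖v₁ - v₄‖ = d

/-- Non-degeneracy of the linkage `Q(a,b,c,d)`:
`ε₁a + ε₂b + ε₃c + ε₄d ≠ 0` for all choices of signs `εᵢ ∈ {±1}`. -/
def NonDeg (a b c d : ℝ) : Prop :=
  ∀ ε₁ ε₂ ε₃ ε₄ : ℝ, (ε₁ = 1 ∨ ε₁ = -1) → (ε₂ = 1 ∨ ε₂ = -1) →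
    (ε₃ = 1 ∨ ε₃ = -1) → (ε₄ = 1 ∨ ε₄ = -1) →
    ε₁ * a + ε₂ * b + ε₃ * c + ε₄ * d ≠ 0

/-!
Moving `v₁` to `0` and `v₃` to `e = ‖v₃ - v₁‖ > 0` by a similarity does not change `R`. Then `e`
ranges over the interval `[max |a - b| |c - d|, min (a + b) (c + d)]`, and `v₂`, `v₄` are apexes
of triangles over `[0, e]` with sides `a, b` and `d, c`, each above or below the real axis. So the
image of `R` is the union of four arcs parametrised by `e`, forming two pairs exchanged by complex
conjugation. At the left end of the interval one of the triangles is flat, which joins each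
same-side arc to an opposite-side arc. By the intermediate value theorem the imaginary part of an
opposite-side arc, which has opposite signs at the two ends, vanishes somewhere, and there this arc
meets its conjugate.
-/

open ComplexConjugate Set

theorem norm_mem_Icc_abs_norm_sub_norm {E : Type*} [SeminormedAddCommGroup E] (w z : E) :
    ‖z‖ ∈ Icc |‖w‖ - ‖w - z‖| (‖w‖ + ‖w - z‖) := by
  constructor
  · simpa using abs_norm_sub_norm_le w (w - z)
  · simpa using norm_sub_le w (w - z)

theorem Complex.norm_eq_of_sq_eq {z : ℂ} {r : ℝ} (hr : 0 ≤ r) (h : z.re ^ 2 + z.im ^ 2 = r ^ 2) :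
    ‖z‖ = r := by
  rw [Complex.norm_def, Complex.normSq_apply, ← Real.sqrt_sq hr, ← h]
  ring_nf

noncomputable def apexRe (a b e : ℝ) : ℝ := (a ^ 2 + e ^ 2 - b ^ 2) / (2 * e)

/-- The apex `z` in the closed upper half-plane of the triangle with base `[0, e]` and sides
`‖z‖ = a`, `‖z - e‖ = b`. -/
noncomputable def apex (a b e : ℝ) : ℂ := ⟨apexRe a b e, √(a ^ 2 - apexRe a b e ^ 2)⟩

section Apex

variable {a b e : ℝ}

theorem two_mul_apexRe (he : e ≠ 0) : 2 * e * apexRe a b e = a ^ 2 + e ^ 2 - b ^ 2 := by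
  unfold apexRe; field_simp

theorem sq_sub_apexRe_sq (he : e ≠ 0) :
    a ^ 2 - apexRe a b e ^ 2 = ((a + b) ^ 2 - e ^ 2) * (e ^ 2 - (a - b) ^ 2) / (4 * e ^ 2) := by
  unfold apexRe; field_simp; ring

theorem apex_im_nonneg (a b e : ℝ) : 0 ≤ (apex a b e).im := Real.sqrt_nonneg _

theorem apex_im_sq (he : 0 < e) (h₁ : |a - b| ≤ e) (h₂ : e ≤ a + b) :
    (apex a b e).im ^ 2 = a ^ 2 - apexRe a b e ^ 2 := by
  refine Real.sq_sqrt ?_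
  rw [sq_sub_apexRe_sq he.ne']
  have : (a - b) ^ 2 ≤ e ^ 2 := by rw [← sq_abs]; gcongr
  have : e ^ 2 ≤ (a + b) ^ 2 := by gcongr
  apply div_nonneg <;> nlinarith

theorem apex_im_eq_zero (he : e ≠ 0) (h : e = |a - b| ∨ e = a + b) : (apex a b e).im = 0 := by
  have : a ^ 2 - apexRe a b e ^ 2 = 0 := by
    rw [sq_sub_apexRe_sq he]
    rcases h with rfl | rfl
    · rw [sq_abs]; ring
    · ring
  simp [apex, this]

theorem norm_apex (ha : 0 ≤ a) (he : 0 < e) (h₁ : |a - b| ≤ e) (h₂ : e ≤ a + b) :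
    ‖apex a b e‖ = a :=
  Complex.norm_eq_of_sq_eq ha (by rw [apex_im_sq he h₁ h₂]; simp [apex])

theorem norm_apex_sub (hb : 0 ≤ b) (he : 0 < e) (h₁ : |a - b| ≤ e) (h₂ : e ≤ a + b) :
    ‖apex a b e - e‖ = b := by
  refine Complex.norm_eq_of_sq_eq hb ?_
  simp only [Complex.sub_re, Complex.sub_im, Complex.ofReal_re, Complex.ofReal_im, sub_zero]
  rw [apex_im_sq he h₁ h₂]
  have := two_mul_apexRe (a := a) (b := b) he.ne'
  simp only [apex]
  linear_combination -this

theorem eq_apex_or_eq_conj_apex {w : ℂ} (he : e ≠ 0) (h₁ : ‖w‖ = a) (h₂ : ‖w - e‖ = b) :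
    w = apex a b e ∨ w = conj (apex a b e) := by
  have hw₁ : w.re ^ 2 + w.im ^ 2 = a ^ 2 := by
    rw [← h₁, Complex.sq_norm, Complex.normSq_apply]; ring
  have hw₂ : (w.re - e) ^ 2 + w.im ^ 2 = b ^ 2 := by
    rw [← h₂, Complex.sq_norm, Complex.normSq_apply]
    simp only [Complex.sub_re, Complex.sub_im, Complex.ofReal_re, Complex.ofReal_im, sub_zero]
    ring
  have hre : w.re = apexRe a b e := by
    rw [apexRe, eq_div_iff (mul_ne_zero two_ne_zero he)]
    linear_combination hw₁ - hw₂
  have him : |w.im| = (apex a b e).im := by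
    rw [apex, ← hre, ← Real.sqrt_sq_eq_abs]
    congr 1
    linarith
  rcases le_or_gt 0 w.im with h | h
  · left
    exact Complex.ext hre (by rw [← him, abs_of_nonneg h])
  · right
    exact Complex.ext (by simp [apex, hre]) (by simp [← him, abs_of_neg h])

theorem continuousOn_apex : ContinuousOn (apex a b) (Ioi 0) := by
  have hre : ContinuousOn (apexRe a b) (Ioi 0) := by
    unfold apexRe
    exact ContinuousOn.div (by fun_prop) (by fun_prop) fun x hx => by
      simp only [mem_Ioi] at hx; positivity
  have him : ContinuousOn (fun e => √(a ^ 2 - apexRe a b e ^ 2)) (Ioi 0) :=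
    Real.continuous_sqrt.comp_continuousOn (continuousOn_const.sub (hre.pow 2))
  exact Complex.equivRealProdCLM.symm.continuous.comp_continuousOn (hre.prodMk him)

end Apex

theorem uniformizer_affine {α : ℂ} (β : ℂ) (hα : α ≠ 0) (v₁ v₂ v₃ v₄ : ℂ) :
    uniformizer (α * v₁ + β) (α * v₂ + β) (α * v₃ + β) (α * v₄ + β) =
      uniformizer v₁ v₂ v₃ v₄ := by
  have h (x y : ℂ) : α * x + β - (α * y + β) = α * (x - y) := by ring
  simp only [uniformizer, h, mul_div_mul_left _ _ hα]

theorem uniformizer_conj (v₁ v₂ v₃ v₄ : ℂ) :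
    uniformizer (conj v₁) (conj v₂) (conj v₃) (conj v₄) = conj (uniformizer v₁ v₂ v₃ v₄) := by
  simp [uniformizer, map_div₀]

theorem ContinuousOn.uniformizer {X : Type*} [TopologicalSpace X] {s : Set X}
    {f₁ f₂ f₃ f₄ : X → ℂ} (h₁ : ContinuousOn f₁ s) (h₂ : ContinuousOn f₂ s)
    (h₃ : ContinuousOn f₃ s) (h₄ : ContinuousOn f₄ s)
    (h₂₃ : ∀ x ∈ s, f₂ x ≠ f₃ x) (h₄₁ : ∀ x ∈ s, f₄ x ≠ f₁ x) :
    ContinuousOn (fun x => _root_.uniformizer (f₁ x) (f₂ x) (f₃ x) (f₄ x)) s :=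
  ((h₂.sub h₁).div (h₂.sub h₃) fun x hx => sub_ne_zero.mpr (h₂₃ x hx)).mul
    ((h₄.sub h₃).div (h₄.sub h₁) fun x hx => sub_ne_zero.mpr (h₄₁ x hx))

/-- When `p = e` or `q = 0` both sides are `0`, by `x / 0 = 0`. -/
theorem uniformizer_zero_conj_im (p q : ℂ) (e : ℝ) :
    (uniformizer 0 p e (conj q)).im =
      -e * (q.im * (‖p‖ ^ 2 + ‖p - e‖ ^ 2 - e ^ 2) + p.im * (‖q‖ ^ 2 + ‖q - e‖ ^ 2 - e ^ 2)) /
        (2 * ‖p - e‖ ^ 2 * ‖q‖ ^ 2) := by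
  simp only [uniformizer, sub_zero, Complex.sq_norm]
  rcases eq_or_ne (p - e) 0 with hp | hp
  · simp [hp]
  rcases eq_or_ne q 0 with hq | hq
  · simp [hq]
  have hp' : Complex.normSq (p - e) ≠ 0 := by simpa using hp
  have hq' : Complex.normSq q ≠ 0 := by simpa using hq
  simp only [Complex.mul_im, Complex.div_re, Complex.div_im, Complex.conj_re, Complex.conj_im,
    Complex.sub_re, Complex.sub_im, Complex.ofReal_re, Complex.ofReal_im, Complex.normSq_apply] at *
  field_simp
  ring

theorem IsConfig.conj {a b c d : ℝ} {v₁ v₂ v₃ v₄ : ℂ} (h : IsConfig a b c d v₁ v₂ v₃ v₄) :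
    IsConfig a b c d (conj v₁) (conj v₂) (conj v₃) (conj v₄) := by
  simpa only [IsConfig, ← map_sub, Complex.norm_conj] using h

theorem isConnected_union_union_image_of_involutive {X : Type*} [TopologicalSpace X]
    {σ : X → X} (hσ : Continuous σ) (hσσ : Function.Involutive σ) {A B : Set X}
    (hA : IsConnected A) (hB : IsConnected B) (hBB : (B ∩ σ '' B).Nonempty)
    (hAB : (A ∩ (B ∪ σ '' B)).Nonempty) :
    IsConnected ((A ∪ σ '' A) ∪ (B ∪ σ '' B)) := by
  set U := B ∪ σ '' B
  have hU : IsConnected U := hB.union hBB (hB.image σ hσ.continuousOn)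
  have hσU : σ '' U = U := by
    simp only [U, image_union, image_image, hσσ _, image_id', union_comm]
  have hAU : IsConnected (A ∪ U) := hA.union hAB hU
  have hσAU : IsConnected (σ '' A ∪ U) := by
    simpa only [image_union, hσU] using hAU.image σ hσ.continuousOn
  obtain ⟨u, hu⟩ := hU.nonempty
  rw [union_union_distrib_right]
  exact hAU.union ⟨u, Or.inr hu, Or.inr hu⟩ hσAU

def diagonalRange (a b c d : ℝ) : Set ℝ := Icc (max |a - b| |c - d|) (min (a + b) (c + d))

/-- The uniformizer of a configuration normalised to `v₁ = 0`, `v₃ = e`, with `v₂` and `v₄` on the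
same side of the diagonal; `oppSideBranch` puts them on opposite sides. -/
noncomputable def sameSideBranch (a b c d e : ℝ) : ℂ :=
  uniformizer 0 (apex a b e) e (apex d c e)

noncomputable def oppSideBranch (a b c d e : ℝ) : ℂ :=
  uniformizer 0 (apex a b e) e (conj (apex d c e))

def uniformizerImage (a b c d : ℝ) : Set ℂ :=
  {w | ∃ v₁ v₂ v₃ v₄ : ℂ, IsConfig a b c d v₁ v₂ v₃ v₄ ∧ uniformizer v₁ v₂ v₃ v₄ = w}

section Linkage

variable {a b c d e : ℝ}

theorem mem_diagonalRange :
    e ∈ diagonalRange a b c d ↔ (|a - b| ≤ e ∧ e ≤ a + b) ∧ (|d - c| ≤ e ∧ e ≤ d + c) := by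
  simp only [diagonalRange, mem_Icc, max_le_iff, le_min_iff, abs_sub_comm c d, add_comm c d]
  tauto

theorem IsConfig.norm_sub_mem_diagonalRange {v₁ v₂ v₃ v₄ : ℂ}
    (h : IsConfig a b c d v₁ v₂ v₃ v₄) : ‖v₃ - v₁‖ ∈ diagonalRange a b c d := by
  obtain ⟨h₁, h₂, h₃, h₄⟩ := h
  have hab := norm_mem_Icc_abs_norm_sub_norm (v₂ - v₁) (v₃ - v₁)
  have hdc := norm_mem_Icc_abs_norm_sub_norm (v₄ - v₁) (v₃ - v₁)
  rw [sub_sub_sub_cancel_right, h₁, norm_sub_rev v₂ v₃, h₂] at hab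
  rw [sub_sub_sub_cancel_right, norm_sub_rev v₄ v₁, h₄, h₃] at hdc
  exact mem_diagonalRange.mpr ⟨hab, hdc⟩

theorem IsConfig.exists_uniformizer_eq {v₁ v₂ v₃ v₄ : ℂ} (h : IsConfig a b c d v₁ v₂ v₃ v₄)
    (hv : v₃ ≠ v₁) :
    ∃ p q : ℂ, (p = apex a b ‖v₃ - v₁‖ ∨ p = conj (apex a b ‖v₃ - v₁‖)) ∧
      (q = apex d c ‖v₃ - v₁‖ ∨ q = conj (apex d c ‖v₃ - v₁‖)) ∧
      uniformizer v₁ v₂ v₃ v₄ = uniformizer 0 p ‖v₃ - v₁‖ q := by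
  obtain ⟨h₁, h₂, h₃, h₄⟩ := h
  set e := ‖v₃ - v₁‖
  have hv' : v₃ - v₁ ≠ 0 := sub_ne_zero.mpr hv
  have he : e ≠ 0 := norm_ne_zero_iff.mpr hv'
  set α : ℂ := e / (v₃ - v₁)
  have hα : ‖α‖ = 1 := by simp [α, he, e]
  have hα₀ : α ≠ 0 := norm_ne_zero_iff.mp (by simp [hα])
  have hαe : α * (v₃ - v₁) = e := div_mul_cancel₀ _ hv'
  have hnorm (x y : ℂ) : ‖α * (x - y)‖ = ‖x - y‖ := by rw [norm_mul, hα, one_mul]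
  refine ⟨α * (v₂ - v₁), α * (v₄ - v₁), eq_apex_or_eq_conj_apex he ?_ ?_,
    eq_apex_or_eq_conj_apex he ?_ ?_, ?_⟩
  · rw [hnorm, h₁]
  · rw [← hαe, ← mul_sub, sub_sub_sub_cancel_right, hnorm, norm_sub_rev, h₂]
  · rw [hnorm, norm_sub_rev, h₄]
  · rw [← hαe, ← mul_sub, sub_sub_sub_cancel_right, hnorm, h₃]
  · rw [← uniformizer_affine (-(α * v₁)) hα₀ v₁]
    congr 1
    · ring
    · ring
    · rw [← hαe]; ring
    · ring

theorem norm_apex_of_mem_diagonalRange (ha : 0 ≤ a) (hb : 0 ≤ b) (hc : 0 ≤ c) (hd : 0 ≤ d)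
    (he₀ : 0 < e) (he : e ∈ diagonalRange a b c d) :
    ‖apex a b e‖ = a ∧ ‖apex a b e - e‖ = b ∧ ‖apex d c e‖ = d ∧ ‖apex d c e - e‖ = c := by
  obtain ⟨⟨h₁, h₂⟩, h₃, h₄⟩ := mem_diagonalRange.mp he
  exact ⟨norm_apex ha he₀ h₁ h₂, norm_apex_sub hb he₀ h₁ h₂, norm_apex hd he₀ h₃ h₄,
    norm_apex_sub hc he₀ h₃ h₄⟩

theorem uniformizerImage_eq (ha : 0 ≤ a) (hb : 0 ≤ b) (hc : 0 ≤ c) (hd : 0 ≤ d)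
    (hpos : 0 < max |a - b| |c - d|) :
    uniformizerImage a b c d =
      (sameSideBranch a b c d '' diagonalRange a b c d ∪
          conj '' (sameSideBranch a b c d '' diagonalRange a b c d)) ∪
        (oppSideBranch a b c d '' diagonalRange a b c d ∪
          conj '' (oppSideBranch a b c d '' diagonalRange a b c d)) := by
  apply Subset.antisymm
  · rintro _ ⟨v₁, v₂, v₃, v₄, hV, rfl⟩
    have he := hV.norm_sub_mem_diagonalRange
    have hv : v₃ ≠ v₁ := sub_ne_zero.mp (norm_pos_iff.mp (hpos.trans_le he.1))
    obtain ⟨p, q, hp, hq, hpq⟩ := hV.exists_uniformizer_eq hv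
    rw [hpq]
    rcases hp with rfl | rfl <;> rcases hq with rfl | rfl
    · exact Or.inl (Or.inl ⟨_, he, rfl⟩)
    · exact Or.inr (Or.inl ⟨_, he, rfl⟩)
    · exact Or.inr (Or.inr ⟨_, ⟨_, he, rfl⟩, by simp [oppSideBranch, ← uniformizer_conj]⟩)
    · exact Or.inl (Or.inr ⟨_, ⟨_, he, rfl⟩, by simp [sameSideBranch, ← uniformizer_conj]⟩)
  · have hconj (w : ℂ) (hw : w ∈ uniformizerImage a b c d) : conj w ∈ uniformizerImage a b c d := by
      obtain ⟨v₁, v₂, v₃, v₄, hV, rfl⟩ := hw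
      exact ⟨_, _, _, _, hV.conj, uniformizer_conj ..⟩
    have hsame : sameSideBranch a b c d '' diagonalRange a b c d ⊆ uniformizerImage a b c d := by
      rintro _ ⟨e, he, rfl⟩
      obtain ⟨h₁, h₂, h₃, h₄⟩ :=
        norm_apex_of_mem_diagonalRange ha hb hc hd (hpos.trans_le he.1) he
      exact ⟨0, apex a b e, e, apex d c e,
        ⟨by simpa using h₁, by rwa [norm_sub_rev], h₄, by simpa using h₃⟩, rfl⟩
    have hopp : oppSideBranch a b c d '' diagonalRange a b c d ⊆ uniformizerImage a b c d := by
      rintro _ ⟨e, he, rfl⟩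
      obtain ⟨h₁, h₂, h₃, h₄⟩ :=
        norm_apex_of_mem_diagonalRange ha hb hc hd (hpos.trans_le he.1) he
      refine ⟨0, apex a b e, e, conj (apex d c e),
        ⟨by simpa using h₁, by rwa [norm_sub_rev], ?_, by simpa using h₃⟩, rfl⟩
      rwa [← Complex.conj_ofReal, ← map_sub, Complex.norm_conj]
    refine union_subset (union_subset hsame ?_) (union_subset hopp ?_)
    · rintro _ ⟨w, hw, rfl⟩; exact hconj w (hsame hw)
    · rintro _ ⟨w, hw, rfl⟩; exact hconj w (hopp hw)

theorem apex_ne_of_mem_diagonalRange (hb : 0 < b) (hd : 0 < d)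
    (hpos : 0 < max |a - b| |c - d|) (he : e ∈ diagonalRange a b c d) :
    apex a b e ≠ e ∧ apex d c e ≠ 0 := by
  obtain ⟨⟨h₁, h₂⟩, h₃, h₄⟩ := mem_diagonalRange.mp he
  have he₀ := hpos.trans_le he.1
  refine ⟨fun h => ?_, fun h => ?_⟩
  · have := norm_apex_sub hb.le he₀ h₁ h₂; simp [h] at this; linarith
  · have := norm_apex hd.le he₀ h₃ h₄; simp [h] at this; linarith

theorem continuousOn_apex_diagonalRange (hpos : 0 < max |a - b| |c - d|) (x y : ℝ) :
    ContinuousOn (apex x y) (diagonalRange a b c d) :=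
  continuousOn_apex.mono fun _ he => hpos.trans_le he.1

theorem continuousOn_sameSideBranch (hb : 0 < b) (hd : 0 < d)
    (hpos : 0 < max |a - b| |c - d|) :
    ContinuousOn (sameSideBranch a b c d) (diagonalRange a b c d) :=
  continuousOn_const.uniformizer (continuousOn_apex_diagonalRange hpos a b)
    Complex.continuous_ofReal.continuousOn (continuousOn_apex_diagonalRange hpos d c)
    (fun _ he => (apex_ne_of_mem_diagonalRange hb hd hpos he).1)
    (fun _ he => (apex_ne_of_mem_diagonalRange hb hd hpos he).2)

theorem continuousOn_oppSideBranch (hb : 0 < b) (hd : 0 < d)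
    (hpos : 0 < max |a - b| |c - d|) :
    ContinuousOn (oppSideBranch a b c d) (diagonalRange a b c d) :=
  continuousOn_const.uniformizer (continuousOn_apex_diagonalRange hpos a b)
    Complex.continuous_ofReal.continuousOn
    (Complex.continuous_conj.comp_continuousOn (continuousOn_apex_diagonalRange hpos d c))
    (fun _ he => (apex_ne_of_mem_diagonalRange hb hd hpos he).1)
    (fun _ he => (map_ne_zero _).mpr (apex_ne_of_mem_diagonalRange hb hd hpos he).2)

theorem oppSideBranch_im (ha : 0 ≤ a) (hb : 0 ≤ b) (hc : 0 ≤ c) (hd : 0 ≤ d) (he₀ : 0 < e)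
    (he : e ∈ diagonalRange a b c d) :
    (oppSideBranch a b c d e).im =
      -e * ((apex d c e).im * (a ^ 2 + b ^ 2 - e ^ 2) + (apex a b e).im * (d ^ 2 + c ^ 2 - e ^ 2)) /
        (2 * b ^ 2 * d ^ 2) := by
  obtain ⟨h₁, h₂, h₃, h₄⟩ := norm_apex_of_mem_diagonalRange ha hb hc hd he₀ he
  rw [oppSideBranch, uniformizer_zero_conj_im, h₁, h₂, h₃, h₄]

theorem oppSideBranch_im_left_nonpos (ha : 0 ≤ a) (hb : 0 ≤ b) (hc : 0 ≤ c) (hd : 0 ≤ d)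
    (hpos : 0 < max |a - b| |c - d|) (hle : max |a - b| |c - d| ≤ min (a + b) (c + d)) :
    (oppSideBranch a b c d (max |a - b| |c - d|)).im ≤ 0 := by
  rw [oppSideBranch_im ha hb hc hd hpos (left_mem_Icc.mpr hle), neg_mul, neg_div, neg_nonpos]
  refine div_nonneg (mul_nonneg hpos.le ?_) (by positivity)
  rcases max_choice |a - b| |c - d| with h | h
  · rw [apex_im_eq_zero hpos.ne' (Or.inl h), h, sq_abs]
    nlinarith [mul_nonneg (mul_nonneg ha hb) (apex_im_nonneg d c |a - b|)]
  · rw [apex_im_eq_zero hpos.ne' (Or.inl (h.trans (abs_sub_comm c d))), h, sq_abs]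
    nlinarith [mul_nonneg (mul_nonneg hc hd) (apex_im_nonneg a b |c - d|)]

theorem oppSideBranch_im_right_nonneg (ha : 0 ≤ a) (hb : 0 ≤ b) (hc : 0 ≤ c) (hd : 0 ≤ d)
    (hpos : 0 < max |a - b| |c - d|) (hle : max |a - b| |c - d| ≤ min (a + b) (c + d)) :
    0 ≤ (oppSideBranch a b c d (min (a + b) (c + d))).im := by
  have hM := hpos.trans_le hle
  rw [oppSideBranch_im ha hb hc hd hM (right_mem_Icc.mpr hle), neg_mul, neg_div, neg_nonneg]
  refine div_nonpos_of_nonpos_of_nonneg (mul_nonpos_of_nonneg_of_nonpos hM.le ?_) (by positivity)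
  rcases min_choice (a + b) (c + d) with h | h
  · rw [apex_im_eq_zero hM.ne' (Or.inr h), h]
    nlinarith [mul_nonneg (mul_nonneg ha hb) (apex_im_nonneg d c (a + b))]
  · rw [apex_im_eq_zero hM.ne' (Or.inr (h.trans (add_comm c d))), h]
    nlinarith [mul_nonneg (mul_nonneg hc hd) (apex_im_nonneg a b (c + d))]

theorem exists_oppSideBranch_im_eq_zero (ha : 0 ≤ a) (hb : 0 < b) (hc : 0 ≤ c) (hd : 0 < d)
    (hpos : 0 < max |a - b| |c - d|) (hle : max |a - b| |c - d| ≤ min (a + b) (c + d)) :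
    ∃ e ∈ diagonalRange a b c d, (oppSideBranch a b c d e).im = 0 :=
  intermediate_value_Icc hle
    (Complex.continuous_im.comp_continuousOn (continuousOn_oppSideBranch hb hd hpos))
    ⟨oppSideBranch_im_left_nonpos ha hb.le hc hd.le hpos hle,
      oppSideBranch_im_right_nonneg ha hb.le hc hd.le hpos hle⟩

theorem sameSideBranch_eq_or_eq_conj_oppSideBranch (hpos : 0 < max |a - b| |c - d|) :
    sameSideBranch a b c d (max |a - b| |c - d|) = oppSideBranch a b c d (max |a - b| |c - d|) ∨
      sameSideBranch a b c d (max |a - b| |c - d|) =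
        conj (oppSideBranch a b c d (max |a - b| |c - d|)) := by
  rcases max_choice |a - b| |c - d| with h | h
  · have hp := Complex.conj_eq_iff_im.mpr (apex_im_eq_zero hpos.ne' (Or.inl h) (a := a) (b := b))
    right
    rw [oppSideBranch, ← uniformizer_conj]
    simp [sameSideBranch, hp]
  · have hq := Complex.conj_eq_iff_im.mpr
      (apex_im_eq_zero hpos.ne' (Or.inl (h.trans (abs_sub_comm c d))) (a := d) (b := c))
    left
    rw [oppSideBranch, hq, sameSideBranch]

end Linkage

theorem stmt_3 (a b c d : ℝ) (ha : 0 < a) (hb : 0 < b) (hc : 0 < c) (hd : 0 < d)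
    (hnd : NonDeg a b c d)
    (hne : ∃ v₁ v₂ v₃ v₄ : ℂ, IsConfig a b c d v₁ v₂ v₃ v₄) :
    IsConnected {w : ℂ | ∃ v₁ v₂ v₃ v₄ : ℂ,
      IsConfig a b c d v₁ v₂ v₃ v₄ ∧ uniformizer v₁ v₂ v₃ v₄ = w} := by
  have hpos : 0 < max |a - b| |c - d| := by
    have := hnd 1 (-1) 1 (-1) (by norm_num) (by norm_num) (by norm_num) (by norm_num)
    rw [lt_max_iff, abs_pos, abs_pos, sub_ne_zero, sub_ne_zero]
    by_contra! h
    exact this (by rw [h.1, h.2]; ring)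
  obtain ⟨v₁, v₂, v₃, v₄, hV⟩ := hne
  have hle := nonempty_Icc.mp ⟨_, hV.norm_sub_mem_diagonalRange⟩
  set E := diagonalRange a b c d
  have hE : IsConnected E := isConnected_Icc hle
  have hm : max |a - b| |c - d| ∈ E := left_mem_Icc.mpr hle
  obtain ⟨e, he, hreal⟩ := exists_oppSideBranch_im_eq_zero ha.le hb hc.le hd hpos hle
  change IsConnected (uniformizerImage a b c d)
  rw [uniformizerImage_eq ha.le hb.le hc.le hd.le hpos]
  refine isConnected_union_union_image_of_involutive Complex.continuous_conj
    Complex.conj_conj (hE.image _ (continuousOn_sameSideBranch hb hd hpos))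
    (hE.image _ (continuousOn_oppSideBranch hb hd hpos))
    ⟨_, mem_image_of_mem _ he, _, mem_image_of_mem _ he, Complex.conj_eq_iff_im.mpr hreal⟩
    ⟨_, mem_image_of_mem _ hm, ?_⟩
  rcases sameSideBranch_eq_or_eq_conj_oppSideBranch hpos with h | h <;> rw [h]
  · exact Or.inl (mem_image_of_mem _ hm)
  · exact Or.inr (mem_image_of_mem _ (mem_image_of_mem _ hm))
end

section
/- Let a, b, c, d be positive real numbers with ε₁a + ε₂b + ε₃c + ε₄d ≠ 0 for every choice of signs εᵢ ∈ {+1, −1}, and such that each of a, b, c, d is less than the sum of the other three. Then the uniformizer R is surjective onto the circle {w ∈ ℂ : |w| = ac/(bd)} — i.e., for every w with |w| = ac/(bd) there is a configuration V of Q(a,b,c,d) with R(V) = w — if and only if (a+b−c−d)(a−b+c−d)(a−b−c+d) ≤ 0. -/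
/-- Each side-length is less than the sum of the other three. -/
def StrictQuad (a b c d : ℝ) : Prop :=
  a < b + c + d ∧ b < a + c + d ∧ c < a + b + d ∧ d < a + b + c

open ComplexConjugate

lemma Complex.exists_norm_eq_re_mul_eq_iff {r g : ℝ} (hr : 0 ≤ r) (u : ℂ) :
    (∃ z : ℂ, ‖z‖ = r ∧ (z * u).re = g) ↔ g ^ 2 ≤ r ^ 2 * ‖u‖ ^ 2 := by
  constructor
  · rintro ⟨z, rfl, rfl⟩
    rw [← mul_pow, ← norm_mul]
    exact sq_le_sq.mpr ((abs_re_le_norm _).trans (le_abs_self _))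
  · intro h
    rcases eq_or_ne u 0 with rfl | hu
    · refine ⟨r, by simp [hr], ?_⟩
      have hg : g = 0 := by simpa using h
      simp [hg]
    · -- `z * u = g + t i` lies on the circle of radius `r ‖u‖` and has real part `g`
      set t := √(r ^ 2 * ‖u‖ ^ 2 - g ^ 2)
      refine ⟨(g + t * I) / u, ?_, by simp [div_mul_cancel₀ _ hu]⟩
      rw [norm_div, norm_add_mul_I, Real.sq_sqrt (by linarith), add_sub_cancel, ← mul_pow,
        Real.sqrt_sq (by positivity), mul_div_cancel_right₀ _ (norm_ne_zero_iff.mpr hu)]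

lemma uniformizer_relation {v₁ v₂ v₃ v₄ : ℂ} (h₂₃ : v₂ - v₃ ≠ 0) (h₄₁ : v₄ - v₁ ≠ 0) :
    (v₂ - v₁) * ((v₂ - v₁) / (v₂ - v₃) - 1) =
      (v₄ - v₁) * ((v₂ - v₁) / (v₂ - v₃) - uniformizer v₁ v₂ v₃ v₄) := by
  unfold uniformizer
  field_simp
  ring

section Linkage

variable {a b c d : ℝ}

lemma IsConfig.exists_apollonius {v₁ v₂ v₃ v₄ : ℂ} (hb : 0 < b) (hd : 0 < d)
    (h : IsConfig a b c d v₁ v₂ v₃ v₄) :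
    ∃ z : ℂ, ‖z‖ = a / b ∧ a * ‖z - 1‖ = d * ‖z - uniformizer v₁ v₂ v₃ v₄‖ := by
  obtain ⟨h₁, h₂, -, h₄⟩ := h
  have n₂₃ : ‖v₂ - v₃‖ = b := by rw [norm_sub_rev, h₂]
  have n₄₁ : ‖v₄ - v₁‖ = d := by rw [norm_sub_rev, h₄]
  have h₂₃ : v₂ - v₃ ≠ 0 := norm_ne_zero_iff.mp (n₂₃ ▸ hb.ne')
  have h₄₁ : v₄ - v₁ ≠ 0 := norm_ne_zero_iff.mp (n₄₁ ▸ hd.ne')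
  refine ⟨(v₂ - v₁) / (v₂ - v₃), by rw [norm_div, h₁, n₂₃], ?_⟩
  simpa only [norm_mul, h₁, n₄₁] using congrArg norm (uniformizer_relation h₂₃ h₄₁)

lemma apollonius_iff_re_eq {z w : ℂ} (ha : 0 < a) (hb : 0 < b) (hd : 0 < d)
    (hz : ‖z‖ = a / b) (hw : ‖w‖ = a * c / (b * d)) :
    a * ‖z - 1‖ = d * ‖z - w‖ ↔
      (z * ((a : ℂ) ^ 2 - (d : ℂ) ^ 2 * conj w)).re =
        a ^ 2 * (a ^ 2 + b ^ 2 - c ^ 2 - d ^ 2) / (2 * b ^ 2) := by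
  have hre : (z * ((a : ℂ) ^ 2 - (d : ℂ) ^ 2 * conj w)).re =
      a ^ 2 * z.re - d ^ 2 * (z * conj w).re := by
    simp [mul_sub, ← Complex.ofReal_pow]
    ring
  rw [← sq_eq_sq₀ (by positivity) (by positivity), mul_pow, mul_pow, Complex.sq_norm,
    Complex.sq_norm, Complex.normSq_sub, Complex.normSq_sub, ← Complex.sq_norm z,
    ← Complex.sq_norm w, hz, hw, hre]
  simp only [map_one, mul_one]
  field_simp
  constructor <;> intro h <;> linear_combination -h

lemma exists_isConfig_of_apollonius {z w : ℂ} (ha : 0 < a) (hb : 0 < b) (hd : 0 < d)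
    (hz : ‖z‖ = a / b) (hw : ‖w‖ = a * c / (b * d)) (hzw : z ≠ w)
    (h : a * ‖z - 1‖ = d * ‖z - w‖) :
    ∃ v₁ v₂ v₃ v₄ : ℂ, IsConfig a b c d v₁ v₂ v₃ v₄ ∧ uniformizer v₁ v₂ v₃ v₄ = w := by
  have hz0 : z ≠ 0 := norm_ne_zero_iff.mp (by rw [hz]; positivity)
  have hzw' : z - w ≠ 0 := sub_ne_zero.mpr hzw
  have hz1 : z - 1 ≠ 0 := by
    rintro h0
    rw [h0, norm_zero, mul_zero, eq_comm, mul_eq_zero, norm_eq_zero] at h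
    exact h.elim hd.ne' hzw'
  have hv₄ : ‖(a : ℂ) * (z - 1) / (z - w)‖ = d := by
    rw [norm_div, norm_mul, Complex.norm_real, Real.norm_of_nonneg ha.le, h]
    field_simp [norm_ne_zero_iff.mpr hzw']
  -- normalise `v₁ = 0`, `v₂ = a`; then `v₃` and `v₄` are forced by `uniformizer_relation`
  refine ⟨0, a, a - a / z, a * (z - 1) / (z - w), ⟨?_, ?_, ?_, ?_⟩, ?_⟩
  · simp [ha.le]
  · rw [sub_sub_cancel_left, norm_neg, norm_div, hz, Complex.norm_real, Real.norm_of_nonneg ha.le]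
    field_simp
  · rw [show (a : ℂ) * (z - 1) / (z - w) - (a - a / z) = a * (z - 1) / (z - w) * (w / z) by
      field_simp; ring, norm_mul, hv₄, norm_div, hw, hz]
    field_simp
  · rw [zero_sub, norm_neg, hv₄]
  · have ha' : (a : ℂ) ≠ 0 := Complex.ofReal_ne_zero.mpr ha.ne'
    unfold uniformizer
    field_simp
    ring

lemma exists_isConfig_uniformizer_eq_iff {w : ℂ} (ha : 0 < a) (hb : 0 < b) (hd : 0 < d)
    (hne : ¬(a = b ∧ c = d)) (hw : ‖w‖ = a * c / (b * d)) :
    (∃ v₁ v₂ v₃ v₄ : ℂ, IsConfig a b c d v₁ v₂ v₃ v₄ ∧ uniformizer v₁ v₂ v₃ v₄ = w) ↔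
      (a ^ 2 * (a ^ 2 + b ^ 2 - c ^ 2 - d ^ 2) / (2 * b ^ 2)) ^ 2 ≤
        (a / b) ^ 2 * ‖(a : ℂ) ^ 2 - (d : ℂ) ^ 2 * conj w‖ ^ 2 := by
  rw [← Complex.exists_norm_eq_re_mul_eq_iff (by positivity)]
  constructor
  · rintro ⟨v₁, v₂, v₃, v₄, hV, rfl⟩
    obtain ⟨z, hz, hap⟩ := hV.exists_apollonius hb hd
    exact ⟨z, hz, (apollonius_iff_re_eq ha hb hd hz hw).mp hap⟩
  · rintro ⟨z, hz, hre⟩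
    have hap := (apollonius_iff_re_eq ha hb hd hz hw).mpr hre
    refine exists_isConfig_of_apollonius ha hb hd hz hw ?_ hap
    rintro rfl
    have hz1 : z = 1 := by
      rw [sub_self, norm_zero, mul_zero, mul_eq_zero, norm_eq_zero, sub_eq_zero] at hap
      exact hap.resolve_left ha.ne'
    subst hz1
    rw [norm_one, eq_comm, div_eq_one_iff_eq hb.ne'] at hz
    rw [norm_one, eq_comm, div_eq_one_iff_eq (by positivity), hz] at hw
    exact hne ⟨hz, mul_left_cancel₀ hb.ne' hw⟩

lemma sq_le_iff_sign_condition (ha : 0 < a) (hb : 0 < b) (hc : 0 < c) (hd : 0 < d) :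
    (a ^ 2 * (a ^ 2 + b ^ 2 - c ^ 2 - d ^ 2) / (2 * b ^ 2)) ^ 2 ≤
        (a / b) ^ 2 * |a ^ 2 - d ^ 2 * (a * c / (b * d))| ^ 2 ↔
      (a + b - c - d) * (a - b + c - d) * (a - b - c + d) ≤ 0 := by
  have key : (a / b) ^ 2 * |a ^ 2 - d ^ 2 * (a * c / (b * d))| ^ 2 -
      (a ^ 2 * (a ^ 2 + b ^ 2 - c ^ 2 - d ^ 2) / (2 * b ^ 2)) ^ 2 =
      (a ^ 4 / (4 * b ^ 4) * (a + b + c + d)) *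
        -((a + b - c - d) * (a - b + c - d) * (a - b - c + d)) := by
    rw [sq_abs]
    field_simp
    ring
  rw [← sub_nonneg, key, mul_nonneg_iff_of_pos_left (by positivity), neg_nonneg]

end Linkage

theorem stmt_4_general (a b c d : ℝ) (ha : 0 < a) (hb : 0 < b) (hc : 0 < c) (hd : 0 < d)
    (hnd : NonDeg a b c d) :
    (∀ w : ℂ, ‖w‖ = a * c / (b * d) →
        ∃ v₁ v₂ v₃ v₄ : ℂ, IsConfig a b c d v₁ v₂ v₃ v₄ ∧
          uniformizer v₁ v₂ v₃ v₄ = w) ↔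
      (a + b - c - d) * (a - b + c - d) * (a - b - c + d) ≤ 0 := by
  have hne : ¬(a = b ∧ c = d) := fun ⟨hab, hcd⟩ =>
    hnd 1 (-1) (-1) 1 (.inl rfl) (.inr rfl) (.inr rfl) (.inl rfl) (by rw [hab, hcd]; ring)
  set s := a * c / (b * d)
  have hs : ‖(s : ℂ)‖ = s := by rw [Complex.norm_real, Real.norm_of_nonneg (by positivity)]
  rw [← sq_le_iff_sign_condition ha hb hc hd]
  constructor
  · intro hsurj
    have h := (exists_isConfig_uniformizer_eq_iff ha hb hd hne hs).mp (hsurj s hs)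
    rwa [Complex.conj_ofReal, ← Complex.ofReal_pow, ← Complex.ofReal_pow, ← Complex.ofReal_mul,
      ← Complex.ofReal_sub, Complex.norm_real, Real.norm_eq_abs] at h
  · intro h w hw
    refine (exists_isConfig_uniformizer_eq_iff ha hb hd hne hw).mpr (h.trans ?_)
    gcongr
    calc |a ^ 2 - d ^ 2 * s| = |‖(a : ℂ) ^ 2‖ - ‖(d : ℂ) ^ 2 * conj w‖| := by
          simp [hw]
      _ ≤ _ := abs_norm_sub_norm_le _ _

theorem stmt_4 (a b c d : ℝ) (ha : 0 < a) (hb : 0 < b) (hc : 0 < c) (hd : 0 < d)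
    (hnd : NonDeg a b c d) (hq : StrictQuad a b c d) :
    (∀ w : ℂ, ‖w‖ = a * c / (b * d) →
        ∃ v₁ v₂ v₃ v₄ : ℂ, IsConfig a b c d v₁ v₂ v₃ v₄ ∧
          uniformizer v₁ v₂ v₃ v₄ = w) ↔
      (a + b - c - d) * (a - b + c - d) * (a - b - c + d) ≤ 0 :=
  stmt_4_general a b c d ha hb hc hd hnd
end

section
/- Let a, b, c, d be positive real numbers with ε₁a + ε₂b + ε₃c + ε₄d ≠ 0 for every choice of signs εᵢ ∈ {+1, −1}. For every complex number w, the set of normalized configurations {(v₃, v₄) ∈ ℂ² : |v₃ − a| = b, |v₄ − v₃| = c, |v₄| = d, and R(0, a, v₃, v₄) = w} has at most two elements. (Multiplicity of the uniformizer at each point does not exceed two.) -/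
open Polynomial ComplexConjugate

theorem Polynomial.encard_setOf_isRoot_le_natDegree {R : Type*} [CommRing R] [IsDomain R]
    {p : R[X]} (hp : p ≠ 0) : {x | p.IsRoot x}.encard ≤ p.natDegree := by
  classical
  have hroots : {x | p.IsRoot x} = ↑p.roots.toFinset := by ext; simp [hp]
  rw [hroots, Set.encard_coe_eq_coe_finsetCard]
  exact_mod_cast p.roots.toFinset_card_le.trans p.card_roots'

theorem mul_sub_eq_of_uniformizer_eq {v z u w : ℂ} (hz : z ≠ v) (hu : u ≠ 0)
    (hR : uniformizer 0 v z u = w) : u * (v - w * (v - z)) = v * z := by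
  rw [uniformizer, sub_zero, sub_zero, div_mul_div_comm,
    div_eq_iff (mul_ne_zero (sub_ne_zero.2 hz.symm) hu)] at hR
  linear_combination hR

/-- Obtained from `|v₄|² = d²` by substituting `v₄ = a v₃ / (a - w (a - v₃))` and eliminating
`conj v₃` by means of `|v₃ - a| = b`. -/
noncomputable def fiberPolynomial (a b d : ℝ) (w : ℂ) : ℂ[X] :=
  C ((d : ℂ) ^ 2) * (C (a * (1 - w)) + C w * X) *
      (C (a : ℂ) * (X - C (a : ℂ)) + C (conj w * b ^ 2))
    - C ((a : ℂ) ^ 2) * X * (C (a : ℂ) * (X - C (a : ℂ)) + C ((b : ℂ) ^ 2))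

theorem natDegree_fiberPolynomial_le (a b d : ℝ) (w : ℂ) :
    (fiberPolynomial a b d w).natDegree ≤ 2 := by
  unfold fiberPolynomial
  compute_degree

section Configuration

variable {a b c d : ℝ} {w z u : ℂ}

theorem norm_uniformizer (ha : 0 ≤ a) (hz : ‖z - a‖ = b) (hzu : ‖u - z‖ = c) (hu : ‖u‖ = d) :
    ‖uniformizer 0 a z u‖ = a * c / (b * d) := by
  rw [uniformizer, sub_zero, sub_zero, norm_mul, norm_div, norm_div, norm_sub_rev (a : ℂ), hz, hzu,
    hu, Complex.norm_real, Real.norm_of_nonneg ha, div_mul_div_comm]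

theorem isRoot_fiberPolynomial (hz : ‖z - a‖ = b) (hu : ‖u‖ = d)
    (hrel : u * (a - w * (a - z)) = a * z) : (fiberPolynomial a b d w).IsRoot z := by
  have hrel' : conj u * (a - conj w * (a - conj z)) = a * conj z := by
    simpa using congrArg conj hrel
  have hz' : (z - a) * (conj z - a) = (b : ℂ) ^ 2 := by
    have := Complex.mul_conj (z - a)
    rw [Complex.normSq_eq_norm_sq, hz] at this
    simpa using this
  have hu' : u * conj u = (d : ℂ) ^ 2 := by
    rw [Complex.mul_conj, Complex.normSq_eq_norm_sq, hu]
    push_cast; rfl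
  simp only [IsRoot, fiberPolynomial, eval_sub, eval_mul, eval_add, eval_C, eval_X]
  linear_combination (z - a) * (-(a - w * (a - z)) * (a - conj w * (a - conj z)) * hu'
      + conj u * (a - conj w * (a - conj z)) * hrel + a * z * hrel')
    - (d ^ 2 * (a - w * (a - z)) * conj w - a ^ 2 * z) * hz'

theorem sub_mul_sub_ne_zero (hnd : NonDeg a b c d) (ha : 0 < a) (hz : ‖z - a‖ = b)
    (hzu : ‖u - z‖ = c) (hu : ‖u‖ = d) (hrel : u * (a - w * (a - z)) = a * z) :
    (a : ℂ) - w * (a - z) ≠ 0 := by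
  intro hD
  obtain rfl : z = 0 := by simpa [hD, ha.ne'] using hrel.symm
  have hba : b = a := by simp [← hz, abs_of_pos ha]
  have hcd : c = d := by simp [← hzu, hu]
  exact hnd 1 (-1) 1 (-1) (by norm_num) (by norm_num) (by norm_num) (by norm_num)
    (by rw [hba, hcd]; ring)

theorem fiberPolynomial_ne_zero (hnd : NonDeg a b c d) (ha : 0 < a) (hb : 0 < b) (hd : 0 < d)
    (hw : ‖w‖ = a * c / (b * d)) : fiberPolynomial a b d w ≠ 0 := by
  intro hp
  have eval_eq_zero (x : ℂ) := congrArg (eval x) hp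
  simp only [fiberPolynomial, eval_sub, eval_mul, eval_add, eval_C, eval_X, eval_zero]
    at eval_eq_zero
  have hw_real : w = ((a / d) ^ 2 : ℝ) := by
    have hconj : conj w = ((a / d) ^ 2 : ℝ) := by
      have hab0 : (a : ℂ) * b ^ 2 ≠ 0 := by norm_cast; positivity
      have : (d : ℂ) ≠ 0 := by norm_cast; positivity
      push_cast
      field_simp
      exact mul_left_cancel₀ hab0 (by linear_combination eval_eq_zero a)
    simpa using congrArg conj hconj
  have hab : a * b = c * d := by
    rw [hw_real, Complex.norm_real, Real.norm_of_nonneg (by positivity)] at hw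
    field_simp at hw
    nlinarith
  have h_0 : d ^ 2 * a * ((1 - (a / d) ^ 2) * ((a / d) ^ 2 * b ^ 2 - a ^ 2)) = 0 := by
    have h := eval_eq_zero 0
    rw [hw_real, Complex.conj_ofReal] at h
    push_cast at h
    exact_mod_cast (by push_cast; linear_combination h :
      (((d ^ 2 * a * ((1 - (a / d) ^ 2) * ((a / d) ^ 2 * b ^ 2 - a ^ 2)) : ℝ) : ℂ) = 0))
  rcases mul_eq_zero.1 ((mul_eq_zero.1 h_0).resolve_left (by positivity)) with h | h
  · obtain rfl : d = a := by field_simp at h; nlinarith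
    obtain rfl : c = b := by nlinarith
    exact hnd 1 1 (-1) (-1) (by norm_num) (by norm_num) (by norm_num) (by norm_num) (by ring)
  · obtain rfl : d = b := by
      field_simp at h
      have hsq : a ^ 2 * d ^ 2 = a ^ 2 * b ^ 2 := by linear_combination -h
      exact (pow_left_inj₀ hd.le hb.le two_ne_zero).1 (mul_left_cancel₀ (by positivity) hsq)
    obtain rfl : c = a := by nlinarith
    exact hnd 1 (-1) (-1) 1 (by norm_num) (by norm_num) (by norm_num) (by norm_num) (by ring)

end Configuration

theorem stmt_6_general (a b c d : ℝ) (ha : 0 < a) (hb : 0 < b) (hd : 0 < d)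
    (hnd : NonDeg a b c d) (w : ℂ) :
    Set.encard {p : ℂ × ℂ |
        ‖p.1 - (a : ℂ)‖ = b ∧ ‖p.2 - p.1‖ = c ∧
        ‖p.2‖ = d ∧ uniformizer 0 (a : ℂ) p.1 p.2 = w} ≤ 2 := by
  set S := {p : ℂ × ℂ | ‖p.1 - (a : ℂ)‖ = b ∧ ‖p.2 - p.1‖ = c ∧
    ‖p.2‖ = d ∧ uniformizer 0 (a : ℂ) p.1 p.2 = w}
  have hrel : ∀ p ∈ S, p.2 * (a - w * (a - p.1)) = a * p.1 := by
    rintro ⟨z, u⟩ ⟨hz, -, hu, hR⟩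
    refine mul_sub_eq_of_uniformizer_eq ?_ ?_ hR
    · rintro rfl
      simp only [sub_self, norm_zero] at hz
      exact hb.ne hz
    · rintro rfl
      simp only [norm_zero] at hu
      exact hd.ne hu
  have hinj : S.InjOn Prod.fst := by
    rintro ⟨z, u⟩ hp ⟨z', u'⟩ hp' (rfl : z = z')
    have hD := sub_mul_sub_ne_zero hnd ha hp.1 hp.2.1 hp.2.2.1 (hrel _ hp)
    exact congrArg (Prod.mk z) (mul_right_cancel₀ hD ((hrel _ hp).trans (hrel _ hp').symm))
  have hroots : Prod.fst '' S ⊆ {z | (fiberPolynomial a b d w).IsRoot z} := by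
    rintro _ ⟨p, hp, rfl⟩
    exact isRoot_fiberPolynomial hp.1 hp.2.2.1 (hrel p hp)
  obtain hS | ⟨p, hp⟩ := S.eq_empty_or_nonempty
  · simp [hS]
  have hw : ‖w‖ = a * c / (b * d) := hp.2.2.2 ▸ norm_uniformizer ha.le hp.1 hp.2.1 hp.2.2.1
  calc S.encard = (Prod.fst '' S).encard := hinj.encard_image.symm
    _ ≤ (fiberPolynomial a b d w).natDegree := (Set.encard_mono hroots).trans
        (encard_setOf_isRoot_le_natDegree (fiberPolynomial_ne_zero hnd ha hb hd hw))
    _ ≤ 2 := by exact_mod_cast natDegree_fiberPolynomial_le a b d w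

theorem stmt_6 (a b c d : ℝ) (ha : 0 < a) (hb : 0 < b) (hc : 0 < c) (hd : 0 < d)
    (hnd : NonDeg a b c d) (w : ℂ) :
    Set.encard {p : ℂ × ℂ |
        ‖p.1 - (a : ℂ)‖ = b ∧ ‖p.2 - p.1‖ = c ∧
        ‖p.2‖ = d ∧ uniformizer 0 (a : ℂ) p.1 p.2 = w} ≤ 2 :=
  stmt_6_general a b c d ha hb hd hnd w
end

section
/- Let a, b, c, d be positive real numbers with ε₁a + ε₂b + ε₃c + ε₄d ≠ 0 for every choice of signs εᵢ ∈ {+1, −1}, and suppose (a+b−c−d)(a−b+c−d)(a−b−c+d) < 0. Then for every complex number w with |w| = ac/(bd), there exist exactly two normalized configurations (v₃, v₄), i.e. exactly two pairs with |v₃ − a| = b, |v₄ − v₃| = c, |v₄| = d and R(0, a, v₃, v₄) = w. -/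
open Complex

theorem Complex.encard_setOf_normSq_eq_and_re_eq {N k : ℝ} (h : k ^ 2 < N) :
    {x : ℂ | normSq x = N ∧ x.re = k}.encard = 2 := by
  set s := √(N - k ^ 2)
  have hs : 0 < s := Real.sqrt_pos.mpr (by linarith)
  have hs2 : s ^ 2 = N - k ^ 2 := Real.sq_sqrt (by linarith)
  have hset : {x : ℂ | normSq x = N ∧ x.re = k} = {⟨k, s⟩, ⟨k, -s⟩} := by
    ext ⟨x, y⟩
    simp only [Set.mem_ofPred_eq, Set.mem_insert_iff, Set.mem_singleton_iff, normSq_mk,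
      Complex.mk.injEq]
    constructor
    · rintro ⟨hN, rfl⟩
      have : (y - s) * (y + s) = 0 := by linear_combination hN - hs2
      rcases mul_eq_zero.mp this with hy | hy
      · exact .inl ⟨rfl, by linarith⟩
      · exact .inr ⟨rfl, by linarith⟩
    · rintro (⟨rfl, rfl⟩ | ⟨rfl, rfl⟩) <;> exact ⟨by linear_combination hs2, rfl⟩
  rw [hset, Set.encard_pair]
  simp only [ne_eq, Complex.mk.injEq, true_and]
  linarith

theorem Complex.encard_setOf_norm_eq_one_and_re_mul_eq {β : ℂ} {k : ℝ} (h : k ^ 2 < normSq β) :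
    {z : ℂ | ‖z‖ = 1 ∧ (β * z).re = k}.encard = 2 := by
  have hβ : β ≠ 0 := by
    rintro rfl
    rw [map_zero] at h
    nlinarith [sq_nonneg k]
  have hunit (z : ℂ) : normSq (β * z) = normSq β ↔ ‖z‖ = 1 := by
    rw [map_mul, mul_eq_left₀ (normSq_pos.2 hβ).ne', normSq_eq_norm_sq,
      pow_eq_one_iff_of_nonneg (norm_nonneg z) two_ne_zero]
  have hset : {z : ℂ | ‖z‖ = 1 ∧ (β * z).re = k} =
      (β * ·) ⁻¹' {x | normSq x = normSq β ∧ x.re = k} :=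
    Set.ext fun z => and_congr_left' (hunit z).symm
  rw [hset, Set.encard_preimage_of_bijective
    ⟨mul_right_injective₀ hβ, fun x => ⟨x / β, mul_div_cancel₀ x hβ⟩⟩,
    encard_setOf_normSq_eq_and_re_eq h]

theorem uniformizer_zero_eq_iff {a v₃ v₄ w : ℂ} (h₃ : a - v₃ ≠ 0) (h₄ : v₄ ≠ 0) :
    uniformizer 0 a v₃ v₄ = w ↔ a * (v₄ - v₃) = w * (a - v₃) * v₄ := by
  rw [uniformizer, sub_zero, sub_zero, div_mul_div_comm, div_eq_iff (mul_ne_zero h₃ h₄)]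
  constructor <;> intro h <;> linear_combination h

theorem sq_lt_normSq_of_mul_neg {a b c d : ℝ} (ha : 0 < a) (hb : 0 < b) (hc : 0 < c)
    (hd : 0 < d) (hneg : (a + b - c - d) * (a - b + c - d) * (a - b - c + d) < 0) {u : ℂ}
    (hu : ‖u‖ = 1) : (a ^ 2 + d ^ 2 - b ^ 2 - c ^ 2) ^ 2 < normSq (2 * a * d + 2 * b * c * u) := by
  have hu2 : u.re * u.re + u.im * u.im = 1 := by
    rw [← normSq_apply, normSq_eq_norm_sq, hu, one_pow]
  have hre : -1 ≤ u.re := (abs_le.1 ((abs_re_le_norm u).trans_eq hu)).1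
  have hβ : normSq (2 * a * d + 2 * b * c * u) =
      4 * (a * d - b * c) ^ 2 + 8 * (a * b * c * d) * (u.re + 1) := by
    simp only [normSq_apply, add_re, add_im, mul_re, mul_im, ofReal_re, ofReal_im, re_ofNat,
      im_ofNat]
    linear_combination (4 * b ^ 2 * c ^ 2) * hu2
  have hgap : 4 * (a * d - b * c) ^ 2 - (a ^ 2 + d ^ 2 - b ^ 2 - c ^ 2) ^ 2 =
      (a + b + c + d) * -((a + b - c - d) * (a - b + c - d) * (a - b - c + d)) := by ring
  have hpos : 0 < (a + b + c + d) * -((a + b - c - d) * (a - b + c - d) * (a - b - c + d)) :=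
    mul_pos (by positivity) (neg_pos.2 hneg)
  have hnonneg : 0 ≤ 8 * (a * b * c * d) * (u.re + 1) := by
    have := neg_le_iff_add_nonneg.1 hre
    positivity
  linarith

theorem norm_sub_eq_norm_add_iff_re_eq (a b c d : ℝ) {u z : ℂ} (hu : ‖u‖ = 1) (hz : ‖z‖ = 1) :
    ‖d * z - a‖ = ‖b + c * u * z‖ ↔
      ((2 * a * d + 2 * b * c * u) * z).re = a ^ 2 + d ^ 2 - b ^ 2 - c ^ 2 := by
  have hu2 : u.re * u.re + u.im * u.im = 1 := by
    rw [← normSq_apply, normSq_eq_norm_sq, hu, one_pow]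
  have hz2 : z.re * z.re + z.im * z.im = 1 := by
    rw [← normSq_apply, normSq_eq_norm_sq, hz, one_pow]
  have key : normSq (d * z - a) - normSq (b + c * u * z) =
      a ^ 2 + d ^ 2 - b ^ 2 - c ^ 2 - ((2 * a * d + 2 * b * c * u) * z).re := by
    simp only [normSq_apply, add_re, add_im, sub_re, sub_im, mul_re, mul_im, ofReal_re,
      ofReal_im, re_ofNat, im_ofNat]
    linear_combination (d ^ 2 - c ^ 2 * (u.re * u.re + u.im * u.im)) * hz2 - c ^ 2 * hu2
  rw [← sq_eq_sq₀ (norm_nonneg _) (norm_nonneg _), ← normSq_eq_norm_sq, ← normSq_eq_norm_sq]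
  constructor <;> intro h <;> linarith

theorem add_mul_ne_zero_of_norm_eq {a b c d : ℝ} (ha : 0 ≤ a) (hb : 0 ≤ b) (hc : 0 ≤ c)
    (hd : 0 ≤ d) (hadbc : a ≠ d ∨ b ≠ c) {u z : ℂ} (hu : ‖u‖ = 1) (hz : ‖z‖ = 1)
    (h : ‖d * z - a‖ = ‖b + c * u * z‖) : (b : ℂ) + c * u * z ≠ 0 := by
  intro h0
  rw [h0, norm_zero, norm_eq_zero, sub_eq_zero] at h
  have had : d = a := by
    simpa [norm_mul, hz, abs_of_nonneg ha, abs_of_nonneg hd] using congrArg norm h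
  have hbc : b = c := by
    simpa [norm_mul, hu, hz, abs_of_nonneg hb, abs_of_nonneg hc] using
      congrArg norm (eq_neg_of_add_eq_zero_left h0)
  exact hadbc.elim (· had.symm) (· hbc)

theorem norm_sub_eq_and_uniformizer_eq_iff {a b c d : ℝ} (ha : a ≠ 0) (hb : b ≠ 0)
    (hc : 0 ≤ c) (hd : d ≠ 0) {u w : ℂ} (hu : ‖u‖ = 1) (huw : a * c * u = -(b * d * w))
    {z ζ : ℂ} (hz : ‖z‖ = 1) (hζ : ‖ζ‖ = 1) :
    ‖d * z - (a + b * ζ)‖ = c ∧ uniformizer 0 a (a + b * ζ) (d * z) = w ↔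
      d * z - a = ζ * (b + c * u * z) := by
  have hz0 : z ≠ 0 := norm_ne_zero_iff.1 (hz ▸ one_ne_zero)
  have hζ0 : ζ ≠ 0 := norm_ne_zero_iff.1 (hζ ▸ one_ne_zero)
  have hR : uniformizer 0 a (a + b * ζ) (d * z) = w ↔ d * z - a = ζ * (b + c * u * z) := by
    rw [uniformizer_zero_eq_iff (by simp [hb, hζ0]) (by simp [hd, hz0])]
    constructor <;> intro h
    · apply mul_left_cancel₀ (ofReal_ne_zero.2 ha)
      linear_combination h - ζ * z * huw
    · linear_combination a * h + ζ * z * huw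
  refine ⟨fun h => hR.1 h.2, fun h => ⟨?_, hR.2 h⟩⟩
  rw [show (d : ℂ) * z - (a + b * ζ) = c * u * z * ζ by linear_combination h]
  simp [hu, hz, hζ, abs_of_nonneg hc]

def normalizedConfigs (a b c d : ℝ) (w : ℂ) : Set (ℂ × ℂ) :=
  {p | ‖p.1 - (a : ℂ)‖ = b ∧ ‖p.2 - p.1‖ = c ∧ ‖p.2‖ = d ∧ uniformizer 0 (a : ℂ) p.1 p.2 = w}

theorem normalizedConfigs_eq_image {a b c d : ℝ} (ha : 0 < a) (hb : 0 < b) (hc : 0 < c)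
    (hd : 0 < d) (hadbc : a ≠ d ∨ b ≠ c) {u w : ℂ} (hu : ‖u‖ = 1)
    (huw : a * c * u = -(b * d * w)) :
    normalizedConfigs a b c d w =
      (fun z : ℂ => ((a : ℂ) + b * ((d * z - a) / (b + c * u * z)), (d : ℂ) * z)) ''
        {z | ‖z‖ = 1 ∧ ((2 * a * d + 2 * b * c * u) * z).re = a ^ 2 + d ^ 2 - b ^ 2 - c ^ 2} := by
  have hb0 : (b : ℂ) ≠ 0 := ofReal_ne_zero.2 hb.ne'
  have hd0 : (d : ℂ) ≠ 0 := ofReal_ne_zero.2 hd.ne'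
  ext ⟨v₃, v₄⟩
  constructor
  · rintro ⟨h₃, h₄₃, h₄, hR⟩
    obtain ⟨z, rfl⟩ : ∃ z, v₄ = d * z := ⟨v₄ / d, (mul_div_cancel₀ _ hd0).symm⟩
    obtain ⟨ζ, rfl⟩ : ∃ ζ, v₃ = a + b * ζ := ⟨(v₃ - a) / b, by field_simp; ring⟩
    have hz : ‖z‖ = 1 := by simpa [abs_of_pos hd, hd.ne'] using h₄
    have hζ : ‖ζ‖ = 1 := by simpa [abs_of_pos hb, hb.ne'] using h₃
    have hclose :=
      (norm_sub_eq_and_uniformizer_eq_iff ha.ne' hb.ne' hc.le hd.ne' hu huw hz hζ).1 ⟨h₄₃, hR⟩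
    have hnorm : ‖d * z - a‖ = ‖b + c * u * z‖ := by rw [hclose, norm_mul, hζ, one_mul]
    have hne := add_mul_ne_zero_of_norm_eq ha.le hb.le hc.le hd.le hadbc hu hz hnorm
    refine ⟨z, ⟨hz, (norm_sub_eq_norm_add_iff_re_eq a b c d hu hz).1 hnorm⟩, ?_⟩
    simp only [hclose, mul_div_cancel_right₀ _ hne]
  · rintro ⟨z, ⟨hz, hre⟩, hp⟩
    obtain ⟨rfl, rfl⟩ := Prod.mk.inj hp
    have hnorm := (norm_sub_eq_norm_add_iff_re_eq a b c d hu hz).2 hre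
    have hne := add_mul_ne_zero_of_norm_eq ha.le hb.le hc.le hd.le hadbc hu hz hnorm
    set ζ := ((d : ℂ) * z - a) / (b + c * u * z)
    have hζ : ‖ζ‖ = 1 := by rw [norm_div, hnorm, div_self (norm_ne_zero_iff.2 hne)]
    have hclose : (d : ℂ) * z - a = ζ * (b + c * u * z) := (div_mul_cancel₀ _ hne).symm
    obtain ⟨h₄₃, hR⟩ :=
      (norm_sub_eq_and_uniformizer_eq_iff ha.ne' hb.ne' hc.le hd.ne' hu huw hz hζ).2 hclose
    exact ⟨by simp [hζ, abs_of_pos hb], h₄₃, by simp [hz, abs_of_pos hd], hR⟩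

theorem stmt_7_general (a b c d : ℝ) (ha : 0 < a) (hb : 0 < b) (hc : 0 < c) (hd : 0 < d)
    (hneg : (a + b - c - d) * (a - b + c - d) * (a - b - c + d) < 0)
    (w : ℂ) (hw : ‖w‖ = a * c / (b * d)) :
    Set.encard {p : ℂ × ℂ |
        ‖p.1 - (a : ℂ)‖ = b ∧ ‖p.2 - p.1‖ = c ∧
        ‖p.2‖ = d ∧ uniformizer 0 (a : ℂ) p.1 p.2 = w} = 2 := by
  have hadbc : a ≠ d ∨ b ≠ c := by
    by_contra! h
    obtain ⟨rfl, rfl⟩ := h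
    simp at hneg
  set u : ℂ := -(b * d * w) / (a * c)
  have hac : (a : ℂ) * c ≠ 0 := by exact_mod_cast (mul_pos ha hc).ne'
  have huw : a * c * u = -(b * d * w) := mul_div_cancel₀ _ hac
  have hu : ‖u‖ = 1 := by
    simp only [u, norm_div, norm_neg, norm_mul, norm_real, hw, Real.norm_eq_abs, abs_of_pos ha,
      abs_of_pos hb, abs_of_pos hc, abs_of_pos hd]
    field_simp
  change (normalizedConfigs a b c d w).encard = 2
  rw [normalizedConfigs_eq_image ha hb hc hd hadbc hu huw, Set.InjOn.encard_image
    fun _ _ _ _ h => mul_left_cancel₀ (ofReal_ne_zero.2 hd.ne') (congrArg Prod.snd h)]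
  exact encard_setOf_norm_eq_one_and_re_mul_eq (sq_lt_normSq_of_mul_neg ha hb hc hd hneg hu)

theorem stmt_7 (a b c d : ℝ) (ha : 0 < a) (hb : 0 < b) (hc : 0 < c) (hd : 0 < d)
    (hnd : NonDeg a b c d)
    (hneg : (a + b - c - d) * (a - b + c - d) * (a - b - c + d) < 0)
    (w : ℂ) (hw : ‖w‖ = a * c / (b * d)) :
    Set.encard {p : ℂ × ℂ |
        ‖p.1 - (a : ℂ)‖ = b ∧ ‖p.2 - p.1‖ = c ∧
        ‖p.2‖ = d ∧ uniformizer 0 (a : ℂ) p.1 p.2 = w} = 2 :=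
  stmt_7_general a b c d ha hb hc hd hneg w hw
end

section
/- Let a, b, c, d be positive real numbers with ε₁a + ε₂b + ε₃c + ε₄d ≠ 0 for every choice of signs εᵢ ∈ {+1, −1}, and such that each of a, b, c, d is less than the sum of the other three. Then the configuration space M = {(v₁,v₂,v₃,v₄) ∈ ℂ⁴ : |v₂−v₁| = a, |v₃−v₂| = b, |v₄−v₃| = c, |v₁−v₄| = d} is a connected subset of ℂ⁴ if and only if (a+b−c−d)(a−b+c−d)(a−b−c+d) ≥ 0. -/
/-!
After a rigid motion putting `v₁` at `0` and `v₃` at `r = |v₃ - v₁| > 0`, a configuration is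
determined by `r` and by the sides `σ₁, σ₂ = ±1` of the diagonal on which `v₂` and `v₄` lie. The
diagonal ranges over `[max(|a-b|, |d-c|), min(a+b, d+c)]`, and `σ₁` (resp. `σ₂`) can only change
where the triangle `v₁v₂v₃` (resp. `v₁v₄v₃`) is flat. Non-degeneracy makes exactly one triangle
flat at each end of this interval. If different triangles flatten at the two ends, the four arcs
close up into one circle; if the same one does at both ends, the sign of the other is a continuous
invariant. The sign of the product tells which case occurs, and reversing the quadrilateral, which
exchanges `(a, b)` with `(d, c)`, reduces everything to the case `|d - c| < |a - b|`.
-/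

open Complex ComplexConjugate Set

lemma sub_mul_nonneg_iff_lt {x y t : ℝ} (ht : 0 < t) (hne : x ≠ y) :
    0 ≤ (x - y) * t ↔ y < x := by
  rw [mul_nonneg_iff_of_pos_right ht, sub_nonneg]
  exact ⟨fun h => lt_of_le_of_ne h hne.symm, le_of_lt⟩

namespace QuadLinkage

/-- Sixteen times the squared area of a triangle with sides `p`, `q`, `r` (Heron's formula). -/
def heron (p q r : ℝ) : ℝ := ((p + q) ^ 2 - r ^ 2) * (r ^ 2 - (p - q) ^ 2)

section Triangle

variable {p q r σ : ℝ}

lemma heron_eq (p q r : ℝ) : heron p q r = 4 * p ^ 2 * r ^ 2 - (p ^ 2 + r ^ 2 - q ^ 2) ^ 2 := by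
  unfold heron; ring

lemma heron_comm (p q r : ℝ) : heron p q r = heron q p r := by
  unfold heron; ring

lemma heron_nonneg (h₁ : |p - q| ≤ r) (h₂ : r ≤ p + q) : 0 ≤ heron p q r := by
  have h₀ : 0 ≤ |p - q| := abs_nonneg _
  exact mul_nonneg (by nlinarith) (by nlinarith [sq_abs (p - q)])

lemma heron_pos (h₁ : |p - q| < r) (h₂ : r < p + q) : 0 < heron p q r := by
  have h₀ : 0 ≤ |p - q| := abs_nonneg _
  exact mul_pos (by nlinarith) (by nlinarith [sq_abs (p - q)])

@[simp] lemma heron_abs_sub (p q : ℝ) : heron p q |p - q| = 0 := by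
  simp [heron, sq_abs]

@[simp] lemma heron_add (p q : ℝ) : heron p q (p + q) = 0 := by
  simp [heron]

lemma four_mul_sq_im_mul_conj (z w : ℂ) :
    4 * (z * conj w).im ^ 2 = heron ‖z‖ ‖z - w‖ ‖w‖ := by
  simp only [heron_eq, Complex.sq_norm, normSq_apply, mul_im, conj_re, conj_im, sub_re, sub_im]
  ring

/-- The third vertex `z` of the triangle with base `0, r` and sides `‖z‖ = p`, `‖r - z‖ = q`,
above the base for `σ = 1` and below it for `σ = -1`. -/
noncomputable def apex (p q r σ : ℝ) : ℂ :=
  ⟨(p ^ 2 + r ^ 2 - q ^ 2) / (2 * r), σ * √(heron p q r) / (2 * r)⟩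

lemma apex_eq_apex_one (h : heron p q r = 0) (σ : ℝ) : apex p q r σ = apex p q r 1 := by
  simp [apex, h]

lemma ofReal_sub_apex (hr : r ≠ 0) : (r : ℂ) - apex p q r σ = apex q p r (-σ) := by
  apply Complex.ext
  · simp only [apex, sub_re, ofReal_re]; field_simp; ring
  · simp only [apex, sub_im, ofReal_im, heron_comm q p]; ring

lemma norm_apex (hr : 0 < r) (h₁ : |p - q| ≤ r) (h₂ : r ≤ p + q) (hσ : σ ^ 2 = 1) :
    ‖apex p q r σ‖ = p := by
  have hp : 0 ≤ p := by linarith [neg_abs_le (p - q)]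
  rw [← sq_eq_sq₀ (norm_nonneg _) hp, Complex.sq_norm, normSq_apply]
  simp only [apex]
  rw [← sq, ← sq, div_pow, div_pow, mul_pow σ, hσ, one_mul, Real.sq_sqrt (heron_nonneg h₁ h₂),
    heron_eq]
  field_simp
  ring

lemma norm_ofReal_sub_apex (hr : 0 < r) (h₁ : |p - q| ≤ r) (h₂ : r ≤ p + q)
    (hσ : σ ^ 2 = 1) : ‖(r : ℂ) - apex p q r σ‖ = q := by
  rw [ofReal_sub_apex hr.ne',
    norm_apex hr (by rwa [abs_sub_comm]) (by linarith) (by rwa [neg_sq])]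

lemma exists_eq_apex {z : ℂ} (hr : 0 < r) (hp : ‖z‖ = p) (hq : ‖(r : ℂ) - z‖ = q) :
    ∃ σ, σ ^ 2 = 1 ∧ z = apex p q r σ := by
  have hp2 : z.re ^ 2 + z.im ^ 2 = p ^ 2 := by rw [← hp, Complex.sq_norm, normSq_apply]; ring
  have hq2 : (r - z.re) ^ 2 + z.im ^ 2 = q ^ 2 := by
    rw [← hq, Complex.sq_norm, normSq_apply, sub_re, sub_im, ofReal_re, ofReal_im]; ring
  have hre : z.re = (p ^ 2 + r ^ 2 - q ^ 2) / (2 * r) := by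
    field_simp; linarith
  have him : heron p q r = (2 * r * z.im) ^ 2 := by
    rw [heron_eq, ← hp2, ← hq2]; ring
  have hsqrt : √(heron p q r) = |2 * r * z.im| := by rw [him, Real.sqrt_sq_eq_abs]
  rcases abs_choice (2 * r * z.im) with h | h
  · refine ⟨1, one_pow 2, Complex.ext hre ?_⟩
    simp only [apex, hsqrt, h]; field_simp
  · refine ⟨-1, by norm_num, Complex.ext hre ?_⟩
    simp only [apex, hsqrt, h]; field_simp

end Triangle

lemma norm_sub_mem_Icc {E : Type*} [SeminormedAddCommGroup E] (x y z : E) :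
    ‖z - x‖ ∈ Icc |‖y - x‖ - ‖z - y‖| (‖y - x‖ + ‖z - y‖) :=
  ⟨by simpa [← norm_neg (z - y)] using abs_norm_sub_norm_le (y - x) (y - z),
    by simpa [add_comm] using norm_sub_le_norm_sub_add_norm_sub z y x⟩

def linkage (a b c d : ℝ) : Set (ℂ × ℂ × ℂ × ℂ) :=
  {v | ‖v.2.1 - v.1‖ = a ∧ ‖v.2.2.1 - v.2.1‖ = b ∧ ‖v.2.2.2 - v.2.2.1‖ = c ∧ ‖v.1 - v.2.2.2‖ = d}

def reverse (v : ℂ × ℂ × ℂ × ℂ) : ℂ × ℂ × ℂ × ℂ := (v.1, v.2.2.2, v.2.2.1, v.2.1)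

lemma reverse_mem_linkage {a b c d : ℝ} {v : ℂ × ℂ × ℂ × ℂ} :
    reverse v ∈ linkage d c b a ↔ v ∈ linkage a b c d := by
  simp only [linkage, reverse, mem_ofPred_eq, norm_sub_rev v.2.2.2 v.1,
    norm_sub_rev v.2.2.1 v.2.2.2, norm_sub_rev v.2.1 v.2.2.1, norm_sub_rev v.1 v.2.1]
  tauto

lemma image_reverse_linkage (a b c d : ℝ) : reverse '' linkage a b c d = linkage d c b a := by
  ext w
  refine ⟨?_, fun hw => ⟨reverse w, reverse_mem_linkage.2 hw, rfl⟩⟩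
  rintro ⟨v, hv, rfl⟩
  exact reverse_mem_linkage.2 hv

lemma IsConnected.linkage_reverse {a b c d : ℝ} (h : IsConnected (linkage a b c d)) :
    IsConnected (linkage d c b a) :=
  image_reverse_linkage a b c d ▸
    h.image _ (by unfold reverse; fun_prop : Continuous reverse).continuousOn

lemma isConnected_linkage_reverse (a b c d : ℝ) :
    IsConnected (linkage d c b a) ↔ IsConnected (linkage a b c d) :=
  ⟨IsConnected.linkage_reverse, IsConnected.linkage_reverse⟩

section Linkage

variable {a b c d r : ℝ} {v : ℂ × ℂ × ℂ × ℂ}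

lemma diagonal_mem_Icc (hv : v ∈ linkage a b c d) :
    ‖v.2.2.1 - v.1‖ ∈ Icc |a - b| (a + b) ∩ Icc |d - c| (d + c) := by
  obtain ⟨h₁, h₂, h₃, h₄⟩ := hv
  constructor
  · simpa only [h₁, h₂] using norm_sub_mem_Icc v.1 v.2.1 v.2.2.1
  · rw [norm_sub_rev] at h₃ h₄
    simpa only [h₃, h₄] using norm_sub_mem_Icc v.1 v.2.2.2 v.2.2.1

/-- `0 < r` is imposed because `apex` divides by `r`. -/
def diagonalRange (a b c d : ℝ) : Set ℝ :=
  Ioi 0 ∩ Icc |a - b| (a + b) ∩ Icc |d - c| (d + c)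

lemma convex_diagonalRange : Convex ℝ (diagonalRange a b c d) :=
  ((convex_Ioi 0).inter (convex_Icc _ _)).inter (convex_Icc _ _)

noncomputable def standardConfig (a b c d r σ₁ σ₂ : ℝ) : ℂ × ℂ × ℂ × ℂ :=
  (0, apex a b r σ₁, r, apex d c r σ₂)

lemma standardConfig_mem {σ₁ σ₂ : ℝ} (hr : r ∈ diagonalRange a b c d) (hσ₁ : σ₁ ^ 2 = 1)
    (hσ₂ : σ₂ ^ 2 = 1) : standardConfig a b c d r σ₁ σ₂ ∈ linkage a b c d := by
  obtain ⟨⟨hr, hab, hab'⟩, hdc, hdc'⟩ := hr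
  refine ⟨?_, ?_, ?_, ?_⟩ <;> simp only [standardConfig]
  · rw [sub_zero, norm_apex hr hab hab' hσ₁]
  · rw [norm_ofReal_sub_apex hr hab hab' hσ₁]
  · rw [norm_sub_rev, norm_ofReal_sub_apex hr hdc hdc' hσ₂]
  · rw [zero_sub, norm_neg, norm_apex hr hdc hdc' hσ₂]

lemma continuousOn_standardConfig {σ₁ σ₂ : ℝ} :
    ContinuousOn (fun r => standardConfig a b c d r σ₁ σ₂) (Ioi 0) := by
  have hapex : ∀ p q σ : ℝ, ContinuousOn (fun r => apex p q r σ) (Ioi 0) := by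
    intro p q σ
    simp only [apex, heron, mk_eq_add_mul_I]
    refine ContinuousOn.add ?_ (ContinuousOn.mul ?_ continuousOn_const) <;>
      refine continuous_ofReal.comp_continuousOn (ContinuousOn.div (by fun_prop) (by fun_prop)
        fun r hr => by simp [(mem_Ioi.1 hr).ne'])
  simp only [standardConfig]
  exact continuousOn_const.prodMk ((hapex _ _ _).prodMk
    (continuous_ofReal.continuousOn.prodMk (hapex _ _ _)))

lemma joinedIn_standardConfig {r₀ r₁ σ₁ σ₂ : ℝ} (hr₀ : r₀ ∈ diagonalRange a b c d)
    (hr₁ : r₁ ∈ diagonalRange a b c d) (hσ₁ : σ₁ ^ 2 = 1) (hσ₂ : σ₂ ^ 2 = 1) :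
    JoinedIn (linkage a b c d) (standardConfig a b c d r₀ σ₁ σ₂)
      (standardConfig a b c d r₁ σ₁ σ₂) := by
  have hpath := (convex_diagonalRange.isPathConnected ⟨r₀, hr₀⟩).joinedIn r₀ hr₀ r₁ hr₁
  refine (hpath.map_continuousOn (continuousOn_standardConfig.mono fun r hr => hr.1.1)).mono ?_
  rintro _ ⟨r, hr, rfl⟩
  exact standardConfig_mem hr hσ₁ hσ₂

lemma exists_eq_standardConfig (hv : v ∈ linkage a b c d) (hr : 0 < r) (h₁ : v.1 = 0)
    (h₃ : v.2.2.1 = r) :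
    ∃ σ₁ σ₂, σ₁ ^ 2 = 1 ∧ σ₂ ^ 2 = 1 ∧ v = standardConfig a b c d r σ₁ σ₂ := by
  obtain ⟨e₁, e₂, e₃, e₄⟩ := hv
  rw [h₁, sub_zero] at e₁
  rw [h₃] at e₂ e₃
  rw [h₁, zero_sub, norm_neg] at e₄
  rw [norm_sub_rev] at e₃
  obtain ⟨σ₁, hσ₁, h₂⟩ := exists_eq_apex hr e₁ e₂
  obtain ⟨σ₂, hσ₂, h₄⟩ := exists_eq_apex hr e₄ e₃
  exact ⟨σ₁, σ₂, hσ₁, hσ₂, by rw [standardConfig, ← h₁, ← h₂, ← h₃, ← h₄]⟩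

end Linkage

lemma mul_exp_neg_arg_mul_I (x : ℂ) : x * exp (-(x.arg * I)) = ‖x‖ := by
  nth_rewrite 1 [← norm_mul_exp_arg_mul_I x]
  rw [mul_assoc, ← exp_add, add_neg_cancel, exp_zero, mul_one]

section Normalization

variable {a b c d : ℝ} {v : ℂ × ℂ × ℂ × ℂ}

/-- At `t = 1` this rigid motion puts `v₁` at the origin and `v₃` on the positive real axis. -/
noncomputable def normalizingMotion (v : ℂ × ℂ × ℂ × ℂ) (t : ℝ) (z : ℂ) : ℂ :=
  (z - t * v.1) * exp (-(t * (v.2.2.1 - v.1).arg * I))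

lemma norm_normalizingMotion_sub (t : ℝ) (z w : ℂ) :
    ‖normalizingMotion v t z - normalizingMotion v t w‖ = ‖z - w‖ := by
  rw [normalizingMotion, normalizingMotion, ← sub_mul, norm_mul, ← ofReal_mul, ← neg_mul,
    ← ofReal_neg, norm_exp_ofReal_mul_I, mul_one, sub_sub_sub_cancel_right]

lemma exists_joinedIn_standardConfig (hv : v ∈ linkage a b c d) (hr : 0 < ‖v.2.2.1 - v.1‖) :
    ∃ σ₁ σ₂, σ₁ ^ 2 = 1 ∧ σ₂ ^ 2 = 1 ∧
      JoinedIn (linkage a b c d) v (standardConfig a b c d ‖v.2.2.1 - v.1‖ σ₁ σ₂) := by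
  set γ : ℝ → ℂ × ℂ × ℂ × ℂ := fun t => (normalizingMotion v t v.1,
    normalizingMotion v t v.2.1, normalizingMotion v t v.2.2.1, normalizingMotion v t v.2.2.2)
    with hγ
  have hγ_mem : ∀ t, γ t ∈ linkage a b c d := by
    obtain ⟨h₁, h₂, h₃, h₄⟩ := hv
    exact fun t => ⟨(norm_normalizingMotion_sub t _ _).trans h₁,
      (norm_normalizingMotion_sub t _ _).trans h₂, (norm_normalizingMotion_sub t _ _).trans h₃,
      (norm_normalizingMotion_sub t _ _).trans h₄⟩
  have hjoin : JoinedIn (linkage a b c d) v (γ 1) :=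
    JoinedIn.ofLine (by simp only [hγ, normalizingMotion]; fun_prop)
      (by simp [hγ, normalizingMotion]) rfl (by rintro _ ⟨t, -, rfl⟩; exact hγ_mem t)
  obtain ⟨σ₁, σ₂, hσ₁, hσ₂, hγ₁⟩ := exists_eq_standardConfig (hγ_mem 1) hr
    (by simp [hγ, normalizingMotion])
    (by simp [hγ, normalizingMotion, mul_exp_neg_arg_mul_I])
  exact ⟨σ₁, σ₂, hσ₁, hσ₂, hγ₁ ▸ hjoin⟩

end Normalization

section Components

variable {a b c d : ℝ}

/-- When the triangle `v₁v₃v₄` can never flatten, the side of the diagonal `v₁v₃` on which `v₄`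
lies is a continuous invariant, and both sides occur. -/
lemma not_isConnected_linkage (ha : 0 ≤ a) (hb : 0 ≤ b) (h : |d - c| < |a - b|)
    (hlt : a + b < c + d) : ¬IsConnected (linkage a b c d) := by
  intro hM
  set f : ℂ × ℂ × ℂ × ℂ → ℝ := fun v => ((v.2.2.2 - v.1) * conj (v.2.2.1 - v.1)).im with hf
  have hf_ne : ∀ v ∈ linkage a b c d, f v ≠ 0 := by
    intro v hv hv₀
    obtain ⟨⟨hab, hab'⟩, hdc, -⟩ := diagonal_mem_Icc hv
    have h4 : 4 * f v ^ 2 = _ := four_mul_sq_im_mul_conj (v.2.2.2 - v.1) (v.2.2.1 - v.1)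
    rw [hv₀, sub_sub_sub_cancel_right, norm_sub_rev, hv.2.2.2, hv.2.2.1] at h4
    have := heron_pos (lt_of_lt_of_le h hab) (by linarith : ‖v.2.2.1 - v.1‖ < d + c)
    linarith
  have hab : |a - b| ≤ a + b := abs_sub_le_iff.2 ⟨by linarith, by linarith⟩
  have hr : a + b ∈ diagonalRange a b c d :=
    ⟨⟨lt_of_le_of_lt (abs_nonneg _) (h.trans_le hab), hab, le_rfl⟩, (h.trans_le hab).le,
      by linarith⟩
  have hpos : 0 < √(heron d c (a + b)) :=
    Real.sqrt_pos.2 (heron_pos (h.trans_le hab) (by linarith))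
  have hval : ∀ σ, f (standardConfig a b c d (a + b) 1 σ) = σ * √(heron d c (a + b)) / 2 := by
    intro σ
    have : a + b ≠ 0 := hr.1.1.ne'
    simp only [hf, standardConfig, sub_zero, conj_ofReal, im_mul_ofReal, apex]
    field_simp
  obtain ⟨v, hv, hv₀⟩ := hM.isPreconnected.intermediate_value
    (standardConfig_mem hr (one_pow 2) (by norm_num : (-1 : ℝ) ^ 2 = 1))
    (standardConfig_mem hr (one_pow 2) (one_pow 2)) (by fun_prop : Continuous f).continuousOn
    (⟨by rw [hval]; linarith, by rw [hval]; linarith⟩ : (0 : ℝ) ∈ Icc _ _)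
  exact hf_ne v hv hv₀

/-- The triangle `v₁v₂v₃` flattens at the shortest diagonal `|a - b|` and the triangle `v₁v₄v₃` at
the longest one `c + d`, so each sign can be reversed while the other is kept. -/
lemma isConnected_linkage (h : |d - c| < |a - b|) (hle : |a - b| ≤ c + d)
    (hlt : c + d < a + b) : IsConnected (linkage a b c d) := by
  have hL : |a - b| ∈ diagonalRange a b c d :=
    ⟨⟨lt_of_le_of_lt (abs_nonneg _) h, le_rfl, by linarith [le_abs_self (a - b)]⟩, h.le,
      by linarith⟩
  have hR : c + d ∈ diagonalRange a b c d :=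
    ⟨⟨lt_of_le_of_lt (abs_nonneg _) (h.trans_le hle), hle, hlt.le⟩, by linarith, by linarith⟩
  have hbase : ∀ σ₁ σ₂ : ℝ, σ₁ ^ 2 = 1 → σ₂ ^ 2 = 1 → JoinedIn (linkage a b c d)
      (standardConfig a b c d |a - b| σ₁ σ₂) (standardConfig a b c d |a - b| 1 1) := by
    intro σ₁ σ₂ hσ₁ hσ₂
    have hflat₁ : apex a b |a - b| σ₁ = apex a b |a - b| 1 :=
      apex_eq_apex_one (heron_abs_sub a b) σ₁
    have hflat₂ : apex d c (c + d) σ₂ = apex d c (c + d) 1 :=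
      apex_eq_apex_one (by rw [add_comm c]; exact heron_add d c) σ₂
    have h₁ := joinedIn_standardConfig hL hR (one_pow 2) hσ₂
    have h₂ := joinedIn_standardConfig hR hL (one_pow 2) (one_pow 2)
    simp only [standardConfig, hflat₁, hflat₂] at h₁ h₂ ⊢
    exact h₁.trans h₂
  refine IsPathConnected.isConnected
    ⟨_, standardConfig_mem hL (one_pow 2) (one_pow 2), fun y hv => ?_⟩
  obtain ⟨hab, hdc⟩ := diagonal_mem_Icc hv
  have hr : ‖y.2.2.1 - y.1‖ ∈ diagonalRange a b c d :=
    ⟨⟨lt_of_le_of_lt (abs_nonneg _) (h.trans_le hab.1), hab⟩, hdc⟩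
  obtain ⟨σ₁, σ₂, hσ₁, hσ₂, hv'⟩ := exists_joinedIn_standardConfig hv hr.1.1
  exact (hv'.trans ((joinedIn_standardConfig hr hL hσ₁ hσ₂).trans (hbase σ₁ σ₂ hσ₁ hσ₂))).symm

lemma isConnected_linkage_iff (ha : 0 ≤ a) (hb : 0 ≤ b) (h : |d - c| < |a - b|)
    (hle : |a - b| ≤ c + d) (hne : a + b ≠ c + d) :
    IsConnected (linkage a b c d) ↔ c + d < a + b :=
  ⟨fun hM => hne.lt_or_gt.resolve_left fun hlt => not_isConnected_linkage ha hb h hlt hM,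
    isConnected_linkage h hle⟩

end Components

end QuadLinkage

namespace NonDeg

variable {a b c d : ℝ}

lemma add_ne_add (h : NonDeg a b c d) : a + b ≠ c + d := fun he =>
  h 1 1 (-1) (-1) (by norm_num) (by norm_num) (by norm_num) (by norm_num) (by linarith)

lemma abs_sub_ne_abs_sub (h : NonDeg a b c d) : |a - b| ≠ |d - c| := fun he => by
  rcases abs_eq_abs.1 he with he | he
  · exact h 1 (-1) 1 (-1) (by norm_num) (by norm_num) (by norm_num) (by norm_num) (by linarith)
  · exact h 1 (-1) (-1) 1 (by norm_num) (by norm_num) (by norm_num) (by norm_num) (by linarith)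

end NonDeg

open QuadLinkage

theorem stmt_8 (a b c d : ℝ) (ha : 0 < a) (hb : 0 < b) (hc : 0 < c) (hd : 0 < d)
    (hnd : NonDeg a b c d) (hq : StrictQuad a b c d) :
    IsConnected {v : ℂ × ℂ × ℂ × ℂ |
        ‖v.2.1 - v.1‖ = a ∧ ‖v.2.2.1 - v.2.1‖ = b ∧
        ‖v.2.2.2 - v.2.2.1‖ = c ∧ ‖v.1 - v.2.2.2‖ = d} ↔
      (a + b - c - d) * (a - b + c - d) * (a - b - c + d) ≥ 0 := by
  obtain ⟨hqa, hqb, hqc, hqd⟩ := hq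
  have hne := hnd.add_ne_add
  have hprod : (a + b - c - d) * (a - b + c - d) * (a - b - c + d) =
      (a + b - (c + d)) * (|a - b| ^ 2 - |d - c| ^ 2) := by
    rw [sq_abs, sq_abs]; ring
  change IsConnected (linkage a b c d) ↔ _
  rw [ge_iff_le, hprod]
  rcases hnd.abs_sub_ne_abs_sub.lt_or_gt with h | h
  · rw [← isConnected_linkage_reverse, isConnected_linkage_iff hd.le hc.le h
      (abs_sub_le_iff.2 ⟨by linarith, by linarith⟩) (fun h => hne (by linarith)),
      show (a + b - (c + d)) * (|a - b| ^ 2 - |d - c| ^ 2) =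
        (d + c - (b + a)) * (|d - c| ^ 2 - |a - b| ^ 2) by ring,
      sub_mul_nonneg_iff_lt (sub_pos.2 (pow_lt_pow_left₀ h (abs_nonneg _) two_ne_zero))
        (fun h => hne (by linarith))]
  · rw [isConnected_linkage_iff ha.le hb.le h (abs_sub_le_iff.2 ⟨by linarith, by linarith⟩) hne,
      sub_mul_nonneg_iff_lt (sub_pos.2 (pow_lt_pow_left₀ h (abs_nonneg _) two_ne_zero)) hne]
end

section
/- Let a, b, c, d be positive real numbers such that each of a, b, c, d is less than the sum of the other three, and suppose (a+b−c−d)(a−b+c−d)(a−b−c+d) = 0 (the 'short aligned' degenerate case). Then the uniformizer R is surjective: for every w ∈ ℂ with |w| = ac/(bd) there exists a configuration V of Q(a,b,c,d) with R(V) = w. -/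
/-!
Put `v₁ = 0`, `v₂ = a z`, `v₄ = d` with `|z| = 1` and `v₃ = v₂ + b y` with `|y| = 1`. Writing
`ω = w · bd/(ac)`, the constraints `|v₄ - v₃| = c` and `R = w` are both met by requiring
`y (b - c ω z̄) = d - a z`, which has a unit solution `y` as soon as `|d - a z| = |b - c ω z̄|`.
That equation in `z` reads `Re (z̄ (2bcω - 2ad)) = b² + c² - a² - d²`, which is solvable on the unit
circle iff `|b² + c² - a² - d²| ≤ |2bcω - 2ad|`, and the right side is at least `2|bc - ad|`.
In the short aligned case `(b² + c² - a² - d²)² - 4(bc - ad)²`, which factors as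
`(a + b + c + d)(a + b - c - d)(a - b + c - d)(a - b - c + d)`, vanishes.
-/

open ComplexConjugate

lemma exists_norm_eq_one_mul_eq_of_norm_eq {𝕜 : Type*} [NormedDivisionRing 𝕜] {A B : 𝕜}
    (h : ‖A‖ = ‖B‖) : ∃ y : 𝕜, ‖y‖ = 1 ∧ y * B = A := by
  by_cases hB : B = 0
  · subst hB
    rw [norm_zero, norm_eq_zero] at h
    exact ⟨1, norm_one, by rw [h, mul_zero]⟩
  · refine ⟨A * B⁻¹, ?_, inv_mul_cancel_right₀ hB A⟩
    rw [norm_mul, norm_inv, h, mul_inv_cancel₀ (norm_ne_zero_iff.mpr hB)]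

lemma Complex.exists_norm_eq_one_re_conj_mul_eq {p : ℂ} {K : ℝ} (h : |K| ≤ ‖p‖) :
    ∃ z : ℂ, ‖z‖ = 1 ∧ (conj z * p).re = K := by
  rcases eq_or_ne p 0 with rfl | hp
  · refine ⟨1, norm_one, ?_⟩
    rw [norm_zero, abs_nonpos_iff] at h
    simp [h]
  · have hp' : ‖p‖ ≠ 0 := norm_ne_zero_iff.mpr hp
    set s := √(‖p‖ ^ 2 - K ^ 2)
    have hs : K ^ 2 + s ^ 2 = ‖p‖ ^ 2 := by
      rw [Real.sq_sqrt (sub_nonneg.mpr (sq_le_sq.mpr (by rwa [abs_norm])))]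
      ring
    refine ⟨(K + s * I) * p / (‖p‖ ^ 2 : ℝ), ?_, ?_⟩
    · rw [norm_div, norm_mul, norm_add_mul_I, hs, Real.sqrt_sq (norm_nonneg p),
        Complex.norm_of_nonneg (sq_nonneg _)]
      field_simp
    · have : conj p * p = (‖p‖ ^ 2 : ℝ) := by rw [mul_comm, mul_conj, normSq_eq_norm_sq]
      rw [map_div₀, map_mul, conj_ofReal, div_mul_eq_mul_div, mul_assoc, this,
        mul_div_cancel_right₀ _ (by exact_mod_cast pow_ne_zero 2 hp')]
      simp

lemma Complex.norm_sub_mul_sq {z : ℂ} (hz : ‖z‖ = 1) (r s : ℝ) :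
    ‖(r : ℂ) - s * z‖ ^ 2 = r ^ 2 + s ^ 2 - 2 * r * s * z.re := by
  have hz' : z.re ^ 2 + z.im ^ 2 = 1 := by
    rw [← one_pow 2, ← hz, Complex.sq_norm, normSq_apply]; ring
  rw [Complex.sq_norm, normSq_apply]
  simp only [sub_re, sub_im, mul_re, mul_im, ofReal_re, ofReal_im]
  linear_combination s ^ 2 * hz'

lemma norm_sub_eq_norm_sub_of_re_conj_mul_eq {a b c d : ℝ} {ω z : ℂ} (hω : ‖ω‖ = 1)
    (hz : ‖z‖ = 1)
    (h : (conj z * (2 * b * c * ω - 2 * a * d)).re = b ^ 2 + c ^ 2 - a ^ 2 - d ^ 2) :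
    ‖(d : ℂ) - a * z‖ = ‖(b : ℂ) - c * (ω * conj z)‖ := by
  have hωz : ‖ω * conj z‖ = 1 := by rw [norm_mul, Complex.norm_conj, hω, hz, one_mul]
  have hre : (conj z * (2 * b * c * ω - 2 * a * d)).re =
      2 * b * c * (ω * conj z).re - 2 * a * d * z.re := by
    simp only [Complex.mul_re, Complex.mul_im, Complex.sub_re, Complex.sub_im, Complex.conj_re,
      Complex.conj_im, Complex.ofReal_re, Complex.ofReal_im, Complex.re_ofNat, Complex.im_ofNat]
    ring
  rw [← sq_eq_sq₀ (norm_nonneg _) (norm_nonneg _), Complex.norm_sub_mul_sq hz,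
    Complex.norm_sub_mul_sq hωz]
  linarith

lemma exists_isConfig_uniformizer_eq_of_norm_eq {a b c d : ℝ} (ha : 0 ≤ a) (hb : 0 < b)
    (hc : 0 ≤ c) (hd : 0 < d) {ω z : ℂ} (hω : ‖ω‖ = 1) (hz : ‖z‖ = 1)
    (h : ‖(d : ℂ) - a * z‖ = ‖(b : ℂ) - c * (ω * conj z)‖) :
    ∃ v₁ v₂ v₃ v₄ : ℂ, IsConfig a b c d v₁ v₂ v₃ v₄ ∧
      uniformizer v₁ v₂ v₃ v₄ = (a * c / (b * d) : ℝ) * ω := by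
  obtain ⟨y, hy, hyB⟩ := exists_norm_eq_one_mul_eq_of_norm_eq h
  have hv₄₃ : (d : ℂ) - (a * z + b * y) = -(c * ω * conj z * y) := by linear_combination -hyB
  refine ⟨0, a * z, a * z + b * y, d, ⟨?_, ?_, ?_, ?_⟩, ?_⟩
  · rw [sub_zero, norm_mul, hz, mul_one, Complex.norm_of_nonneg ha]
  · rw [add_sub_cancel_left, norm_mul, hy, mul_one, Complex.norm_of_nonneg hb.le]
  · rw [hv₄₃, norm_neg, norm_mul, norm_mul, norm_mul, Complex.norm_conj, hω, hz, hy,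
      Complex.norm_of_nonneg hc]
    ring
  · rw [zero_sub, norm_neg, Complex.norm_of_nonneg hd.le]
  · have hzz : z * conj z = 1 := by
      rw [Complex.mul_conj, Complex.normSq_eq_norm_sq, hz]; simp
    have hy0 : y ≠ 0 := norm_ne_zero_iff.mp (hy ▸ one_ne_zero)
    have hb0 : (b : ℂ) ≠ 0 := by exact_mod_cast hb.ne'
    have hd0 : (d : ℂ) ≠ 0 := by exact_mod_cast hd.ne'
    rw [uniformizer, hv₄₃, sub_zero, sub_zero, show a * z - (a * z + b * y) = -(b * y) by ring]
    push_cast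
    field_simp
    linear_combination a * c * ω * hzz

theorem exists_isConfig_uniformizer_eq {a b c d : ℝ} (ha : 0 < a) (hb : 0 < b) (hc : 0 < c)
    (hd : 0 < d) (h : (b ^ 2 + c ^ 2 - a ^ 2 - d ^ 2) ^ 2 ≤ 4 * (b * c - a * d) ^ 2) {w : ℂ}
    (hw : ‖w‖ = a * c / (b * d)) :
    ∃ v₁ v₂ v₃ v₄ : ℂ, IsConfig a b c d v₁ v₂ v₃ v₄ ∧ uniformizer v₁ v₂ v₃ v₄ = w := by
  have hr : 0 < a * c / (b * d) := by positivity
  set ω := w / (a * c / (b * d) : ℝ)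
  have hω : ‖ω‖ = 1 := by rw [norm_div, hw, Complex.norm_of_nonneg hr.le, div_self hr.ne']
  have hK : |b ^ 2 + c ^ 2 - a ^ 2 - d ^ 2| ≤ ‖2 * b * c * ω - 2 * a * d‖ := calc
    _ ≤ |2 * b * c - 2 * a * d| := sq_le_sq.mp (by linear_combination h)
    _ = |‖(2 * b * c * ω : ℂ)‖ - ‖(2 * a * d : ℂ)‖| := by
      rw [norm_mul, hω, mul_one]
      norm_cast
      rw [Real.norm_of_nonneg (by positivity), Real.norm_of_nonneg (by positivity)]
    _ ≤ _ := abs_norm_sub_norm_le _ _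
  obtain ⟨z, hz, hzK⟩ := Complex.exists_norm_eq_one_re_conj_mul_eq hK
  obtain ⟨v₁, v₂, v₃, v₄, hV, hR⟩ := exists_isConfig_uniformizer_eq_of_norm_eq ha.le hb hc.le hd
    hω hz (norm_sub_eq_norm_sub_of_re_conj_mul_eq hω hz hzK)
  refine ⟨v₁, v₂, v₃, v₄, hV, ?_⟩
  rw [hR, mul_div_cancel₀ _ (by exact_mod_cast hr.ne')]

theorem stmt_11_general (a b c d : ℝ) (ha : 0 < a) (hb : 0 < b) (hc : 0 < c) (hd : 0 < d)
    (hzero : (a + b - c - d) * (a - b + c - d) * (a - b - c + d) = 0) :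
    ∀ w : ℂ, ‖w‖ = a * c / (b * d) →
      ∃ v₁ v₂ v₃ v₄ : ℂ, IsConfig a b c d v₁ v₂ v₃ v₄ ∧
        uniformizer v₁ v₂ v₃ v₄ = w := by
  intro w hw
  refine exists_isConfig_uniformizer_eq ha hb hc hd (le_of_eq ?_) hw
  linear_combination (a + b + c + d) * hzero

theorem stmt_11 (a b c d : ℝ) (ha : 0 < a) (hb : 0 < b) (hc : 0 < c) (hd : 0 < d)
    (hq : StrictQuad a b c d)
    (hzero : (a + b - c - d) * (a - b + c - d) * (a - b - c + d) = 0) :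
    ∀ w : ℂ, ‖w‖ = a * c / (b * d) →
      ∃ v₁ v₂ v₃ v₄ : ℂ, IsConfig a b c d v₁ v₂ v₃ v₄ ∧
        uniformizer v₁ v₂ v₃ v₄ = w :=
  stmt_11_general a b c d ha hb hc hd hzero
end

section
/- Let a, b, c, d be positive real numbers with a + b ≠ c + d. Then there exist no real numbers α, γ simultaneously satisfying the three equations: a² + b² − 2ab·cos α = c² + d² − 2cd·cos γ, ab·sin α + cd·sin γ = 0, and ab·cos α = cd·cos γ. (Hence at each critical point of arg R on the moduli space of a non-degenerate quadrilateral linkage the second derivative is nonzero, so each critical point is a fold.) -/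
theorem stmt_13 (a b c d : ℝ) (ha : 0 < a) (hb : 0 < b) (hc : 0 < c) (hd : 0 < d)
    (hne : a + b ≠ c + d) :
    ¬ ∃ α γ : ℝ,
        a ^ 2 + b ^ 2 - 2 * a * b * Real.cos α
          = c ^ 2 + d ^ 2 - 2 * c * d * Real.cos γ ∧
        a * b * Real.sin α + c * d * Real.sin γ = 0 ∧
        a * b * Real.cos α = c * d * Real.cos γ := by
  rintro ⟨α, γ, h1, h2, h3⟩
  have s1 := Real.sin_sq_add_cos_sq α
  have s2 := Real.sin_sq_add_cos_sq γ
  have hsq2 : (a * b) ^ 2 = (c * d) ^ 2 := by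
    linear_combination (a * b * Real.sin α - c * d * Real.sin γ) * h2 +
      (a * b * Real.cos α + c * d * Real.cos γ) * h3 + (c * d) ^ 2 * s2 - (a * b) ^ 2 * s1
  have hab : a * b = c * d := by
    nlinarith [mul_pos ha hb, mul_pos hc hd]
  have hsq : (a + b) ^ 2 = (c + d) ^ 2 := by nlinarith
  exact hne (by nlinarith [add_pos ha hb, add_pos hc hd])
end

section
/- Let a, b, c be positive real numbers and define w : ℝ² → ℂ by w(φ, η) = (a + b·e^{iφ} + c·e^{iη})·e^{i(φ−η)}. Then, identifying ℂ with ℝ² via z ↦ (Re z, Im z), the Jacobian determinant of w at (φ, η) (the determinant of the 2×2 matrix with columns ∂w/∂φ and ∂w/∂η) equals ab·sin φ + ac·sin η + bc·sin(η − φ), i.e., twice the signed area of the arm configuration 0, a, a + b·e^{iφ}, a + b·e^{iφ} + c·e^{iη}. -/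
open Complex in
theorem stmt_14 (a b c : ℝ) (ha : 0 < a) (hb : 0 < b) (hc : 0 < c) (φ η : ℝ)
    (w : ℝ → ℝ → ℂ)
    (hw : w = fun (φ η : ℝ) =>
      ((a : ℂ) + (b : ℂ) * Complex.exp (I * (φ : ℂ)) +
        (c : ℂ) * Complex.exp (I * (η : ℂ))) *
        Complex.exp (I * ((φ : ℂ) - (η : ℂ)))) :
    (deriv (fun s => w s η) φ).re * (deriv (fun t => w φ t) η).im
      - (deriv (fun s => w s η) φ).im * (deriv (fun t => w φ t) η).re
    = a * b * Real.sin φ + a * c * Real.sin η + b * c * Real.sin (η - φ) := by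
  subst hw
  have hx : ∀ x : ℝ, HasDerivAt (fun s : ℝ => Complex.exp (I * (s : ℂ)))
      (Complex.exp (I * (x : ℂ)) * I) x := by
    intro x
    have h := (Complex.hasDerivAt_exp (I * (x : ℂ))).comp (x : ℂ)
      ((hasDerivAt_id ((x : ℂ))).const_mul I)
    simp only [Function.comp_def, mul_one] at h
    exact h.comp_ofReal
  have hg1 : HasDerivAt (fun s : ℝ => Complex.exp (I * ((s : ℂ) - (η : ℂ))))
      (Complex.exp (I * ((φ : ℂ) - (η : ℂ))) * I) φ := by
    have h := (Complex.hasDerivAt_exp (I * ((φ : ℂ) - (η : ℂ)))).comp (φ : ℂ)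
      (((hasDerivAt_id ((φ : ℂ))).sub_const (η : ℂ)).const_mul I)
    simp only [Function.comp_def, mul_one] at h
    exact h.comp_ofReal
  have hg2 : HasDerivAt (fun t : ℝ => Complex.exp (I * ((φ : ℂ) - (t : ℂ))))
      (Complex.exp (I * ((φ : ℂ) - (η : ℂ))) * -I) η := by
    have h := (Complex.hasDerivAt_exp (I * ((φ : ℂ) - (η : ℂ)))).comp (η : ℂ)
      (((hasDerivAt_id ((η : ℂ))).const_sub (φ : ℂ)).const_mul I)
    simp only [Function.comp_def, id] at h
    rw [show I * (-1 : ℂ) = -I by ring] at h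
    exact h.comp_ofReal
  have hf1 : HasDerivAt
      (fun s : ℝ => ((a : ℂ) + (b : ℂ) * Complex.exp (I * (s : ℂ)) +
        (c : ℂ) * Complex.exp (I * (η : ℂ))) * Complex.exp (I * ((s : ℂ) - (η : ℂ))))
      ((b : ℂ) * (Complex.exp (I * (φ : ℂ)) * I) * Complex.exp (I * ((φ : ℂ) - (η : ℂ)))
        + ((a : ℂ) + (b : ℂ) * Complex.exp (I * (φ : ℂ)) +
          (c : ℂ) * Complex.exp (I * (η : ℂ))) *
          (Complex.exp (I * ((φ : ℂ) - (η : ℂ))) * I)) φ :=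
    ((((hx φ).const_mul (b : ℂ)).const_add (a : ℂ)).add_const
      ((c : ℂ) * Complex.exp (I * (η : ℂ)))).mul hg1
  have hf2 : HasDerivAt
      (fun t : ℝ => ((a : ℂ) + (b : ℂ) * Complex.exp (I * (φ : ℂ)) +
        (c : ℂ) * Complex.exp (I * (t : ℂ))) * Complex.exp (I * ((φ : ℂ) - (t : ℂ))))
      ((c : ℂ) * (Complex.exp (I * (η : ℂ)) * I) * Complex.exp (I * ((φ : ℂ) - (η : ℂ)))
        + ((a : ℂ) + (b : ℂ) * Complex.exp (I * (φ : ℂ)) +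
          (c : ℂ) * Complex.exp (I * (η : ℂ))) *
          (Complex.exp (I * ((φ : ℂ) - (η : ℂ))) * -I)) η :=
    (((hx η).const_mul (c : ℂ)).const_add
      ((a : ℂ) + (b : ℂ) * Complex.exp (I * (φ : ℂ)))).mul hg2
  rw [hf1.deriv, hf2.deriv]
  have e1 : I * (φ : ℂ) = (φ : ℂ) * I := by ring
  have e2 : I * (η : ℂ) = (η : ℂ) * I := by ring
  have e3 : I * ((φ : ℂ) - (η : ℂ)) = ((φ - η : ℝ) : ℂ) * I := by push_cast; ring
  rw [e1, e2, e3]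
  simp only [Complex.exp_mul_I, Complex.add_re, Complex.add_im, Complex.mul_re,
    Complex.mul_im, Complex.I_re, Complex.I_im, Complex.ofReal_re, Complex.ofReal_im,
    Complex.neg_re, Complex.neg_im, Complex.cos_ofReal_re, Complex.cos_ofReal_im,
    Complex.sin_ofReal_re, Complex.sin_ofReal_im]
  have p1 := Real.sin_sq_add_cos_sq (φ - η)
  rw [Real.sin_sub, Real.cos_sub] at p1
  rw [Real.sin_sub η φ, Real.cos_sub φ η, Real.sin_sub φ η]
  linear_combination (a * b * Real.sin φ + a * c * Real.sin η +
    b * c * (Real.sin η * Real.cos φ - Real.cos η * Real.sin φ)) * p1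
end

section
/- Let a, b, c be positive real numbers and define F : ℝ² → ℂ by F(φ, η) = −(b/(ac))·(a + b·e^{iφ} + c·e^{iη})·e^{i(φ−η)} (the inverse uniformizer of the planar robot 3-arm A(a,b,c)). Then, identifying ℂ with ℝ², the Jacobian determinant of F at (φ, η) equals (b²/(a²c²))·(ab·sin φ + ac·sin η + bc·sin(η − φ)). In particular, (φ, η) is a critical point of F if and only if the signed area of the corresponding arm configuration is zero. -/
/-!
Both partial derivatives of `F` carry the unimodular factor `I * exp (I * (φ - η))`, which drops
out of the Jacobian determinant `(conj ∂φF * ∂ηF).im`. What remains, up to the factor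
`-b ^ 2 / (a ^ 2 * c ^ 2)`, is the imaginary part of `conj (a + 2x + y) * (a + x)` with `x = b e^{iφ}`,
`y = c e^{iη}`, which expands to the doubled signed area. A real-linear map `ℝ² → ℂ` is surjective
exactly when its determinant is nonzero, which gives the characterisation of critical points.
-/

open Complex

theorem LinearMap.surjective_iff_re_im_det_ne_zero (L : ℝ × ℝ →ₗ[ℝ] ℂ) :
    Function.Surjective L ↔
      (L (1, 0)).re * (L (0, 1)).im - (L (1, 0)).im * (L (0, 1)).re ≠ 0 := by
  set M : Module.End ℝ (ℝ × ℝ) := equivRealProdLm.toLinearMap ∘ₗ L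
  have hM : Function.Surjective L ↔ IsUnit M := by
    rw [Module.End.isUnit_iff, Function.Bijective, LinearMap.injective_iff_surjective, and_self]
    simp [M]
  rw [hM, LinearMap.isUnit_iff_isUnit_det, isUnit_iff_ne_zero,
    ← LinearMap.det_toMatrix (Module.Basis.finTwoProd ℝ), Matrix.det_fin_two]
  simp [M, LinearMap.toMatrix_apply, mul_comm]

section Partials

variable {G : Type*} [NormedAddCommGroup G] [NormedSpace ℝ G] {f : ℝ × ℝ → G} {x y : ℝ}

theorem fderiv_apply_one_zero (hf : DifferentiableAt ℝ f (x, y)) :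
    fderiv ℝ f (x, y) (1, 0) = deriv (fun s => f (s, y)) x :=
  (hf.hasFDerivAt.comp_hasDerivAt x ((hasDerivAt_id x).prodMk (hasDerivAt_const x y))).deriv.symm

theorem fderiv_apply_zero_one (hf : DifferentiableAt ℝ f (x, y)) :
    fderiv ℝ f (x, y) (0, 1) = deriv (fun t => f (x, t)) y :=
  (hf.hasFDerivAt.comp_hasDerivAt y ((hasDerivAt_const y x).prodMk (hasDerivAt_id y))).deriv.symm

end Partials

theorem cexp_I_mul_ofReal (θ : ℝ) : exp (I * θ) = Real.cos θ + Real.sin θ * I := by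
  rw [mul_comm, exp_mul_I, ← ofReal_cos, ← ofReal_sin]

theorem hasDerivAt_cexp_I_mul_ofReal (x : ℝ) :
    HasDerivAt (fun s : ℝ => exp (I * s)) (I * exp (I * x)) x :=
  ((hasDerivAt_id' x).ofReal_comp.const_mul I).cexp.congr_deriv (by push_cast; ring)

noncomputable def invUniformizer (a b c : ℝ) (p : ℝ × ℝ) : ℂ :=
  -((b : ℂ) / ((a : ℂ) * (c : ℂ))) *
    ((a : ℂ) + (b : ℂ) * exp (I * (p.1 : ℂ)) + (c : ℂ) * exp (I * (p.2 : ℂ))) *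
    exp (I * ((p.1 : ℂ) - (p.2 : ℂ)))

namespace invUniformizer

variable (a b c φ η : ℝ)

theorem differentiable : Differentiable ℝ (invUniformizer a b c) := by
  unfold invUniformizer
  fun_prop

theorem hasDerivAt_fst :
    HasDerivAt (fun s => invUniformizer a b c (s, η))
      (-(b / (a * c) : ℝ) * I * exp (I * (φ - η)) * (a + 2 * b * exp (I * φ) + c * exp (I * η)))
      φ := by
  have hE : HasDerivAt (fun s : ℝ => exp (I * (s - η))) (I * exp (I * (φ - η))) φ :=
    (((hasDerivAt_id' φ).ofReal_comp.sub_const (η : ℂ)).const_mul I).cexp.congr_deriv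
      (by push_cast; ring)
  exact ((((hasDerivAt_cexp_I_mul_ofReal φ).const_mul (b : ℂ)).const_add (a : ℂ)).add_const
    ((c : ℂ) * exp (I * η)) |>.const_mul (-((b : ℂ) / ((a : ℂ) * (c : ℂ))))).mul hE
    |>.congr_deriv (by push_cast; ring)

theorem hasDerivAt_snd :
    HasDerivAt (fun t => invUniformizer a b c (φ, t))
      ((b / (a * c) : ℝ) * I * exp (I * (φ - η)) * (a + b * exp (I * φ))) η := by
  have hE : HasDerivAt (fun t : ℝ => exp (I * (φ - t))) (-(I * exp (I * (φ - η)))) η :=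
    (((hasDerivAt_id' η).ofReal_comp.const_sub (φ : ℂ)).const_mul I).cexp.congr_deriv
      (by push_cast; ring)
  exact (((hasDerivAt_cexp_I_mul_ofReal η).const_mul (c : ℂ)).const_add
    ((a : ℂ) + b * exp (I * φ)) |>.const_mul (-((b : ℂ) / ((a : ℂ) * (c : ℂ))))).mul hE
    |>.congr_deriv (by push_cast; ring)

end invUniformizer

theorem jacobian_eq_sq_mul_doubleArea (a b c k φ η : ℝ) :
    (-k * I * exp (I * (φ - η)) * (a + 2 * b * exp (I * φ) + c * exp (I * η))).re *
        (k * I * exp (I * (φ - η)) * (a + b * exp (I * φ))).im -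
      (-k * I * exp (I * (φ - η)) * (a + 2 * b * exp (I * φ) + c * exp (I * η))).im *
        (k * I * exp (I * (φ - η)) * (a + b * exp (I * φ))).re
      = k ^ 2 * (a * b * Real.sin φ + a * c * Real.sin η + b * c * Real.sin (η - φ)) := by
  have hθ : (φ : ℂ) - η = ((φ - η : ℝ) : ℂ) := by push_cast; ring
  simp only [hθ, cexp_I_mul_ofReal, add_re, add_im, mul_re, mul_im, neg_re, neg_im, ofReal_re,
    ofReal_im, I_re, I_im, re_ofNat, im_ofNat]
  rw [Real.sin_sub η φ]
  linear_combination (k ^ 2 * (a * b * Real.sin φ + a * c * Real.sin η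
    + b * c * (Real.sin η * Real.cos φ - Real.cos η * Real.sin φ))) *
      Real.sin_sq_add_cos_sq (φ - η)

open Complex in
theorem stmt_15 (a b c : ℝ) (ha : 0 < a) (hb : 0 < b) (hc : 0 < c) (φ η : ℝ)
    (F : ℝ × ℝ → ℂ)
    (hF : F = fun p : ℝ × ℝ =>
      -((b : ℂ) / ((a : ℂ) * (c : ℂ))) *
        ((a : ℂ) + (b : ℂ) * Complex.exp (I * (p.1 : ℂ)) +
          (c : ℂ) * Complex.exp (I * (p.2 : ℂ))) *
        Complex.exp (I * ((p.1 : ℂ) - (p.2 : ℂ)))) :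
    ((deriv (fun s => F (s, η)) φ).re * (deriv (fun t => F (φ, t)) η).im
        - (deriv (fun s => F (s, η)) φ).im * (deriv (fun t => F (φ, t)) η).re
      = b ^ 2 / (a ^ 2 * c ^ 2) *
          (a * b * Real.sin φ + a * c * Real.sin η + b * c * Real.sin (η - φ))) ∧
    (¬ Function.Surjective (fderiv ℝ F (φ, η)) ↔
      (1 / 2) * (a * b * Real.sin φ + a * c * Real.sin η
        + b * c * Real.sin (η - φ)) = 0) := by
  obtain rfl : F = invUniformizer a b c := hF
  have hdiff := invUniformizer.differentiable a b c (φ, η)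
  have hjac := jacobian_eq_sq_mul_doubleArea a b c (b / (a * c)) φ η
  rw [div_pow, mul_pow] at hjac
  rw [← (invUniformizer.hasDerivAt_fst a b c φ η).deriv,
    ← (invUniformizer.hasDerivAt_snd a b c φ η).deriv] at hjac
  refine ⟨hjac, ?_⟩
  have hsurj := LinearMap.surjective_iff_re_im_det_ne_zero (fderiv ℝ (invUniformizer a b c) (φ, η))
  simp only [ContinuousLinearMap.coe_coe] at hsurj
  rw [fderiv_apply_one_zero hdiff, fderiv_apply_zero_one hdiff, hjac] at hsurj
  have hk : b ^ 2 / (a ^ 2 * c ^ 2) ≠ 0 := by positivity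
  rw [hsurj, not_not, mul_eq_zero, mul_eq_zero]
  simp [hk]
end

section
/- Let a, b, c be positive real numbers and let φ, η ∈ ℝ satisfy a + b·e^{iφ} + c·e^{iη} = 0 (so the 3-arm closes up into a triangle). Then ab·sin φ + ac·sin η + bc·sin(η − φ) = bc·sin(η − φ) = ab·sin φ; in particular, if sin φ ≠ 0 (the triangle is non-degenerate, i.e., not aligned), this quantity is nonzero. Consequently, the point ∞ ∈ ℙ¹(ℂ) is a regular value of the uniformizer R of the robot 3-arm: the Jacobian of R⁻¹ does not vanish at any non-aligned closed configuration. -/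
open Complex in
theorem stmt_16 (a b c : ℝ) (ha : 0 < a) (hb : 0 < b) (hc : 0 < c) (φ η : ℝ)
    (hclosed : (a : ℂ) + (b : ℂ) * Complex.exp (I * (φ : ℂ)) +
      (c : ℂ) * Complex.exp (I * (η : ℂ)) = 0) :
    (a * b * Real.sin φ + a * c * Real.sin η + b * c * Real.sin (η - φ)
        = b * c * Real.sin (η - φ)) ∧
    (a * b * Real.sin φ + a * c * Real.sin η + b * c * Real.sin (η - φ)
        = a * b * Real.sin φ) ∧
    (Real.sin φ ≠ 0 →
      a * b * Real.sin φ + a * c * Real.sin η + b * c * Real.sin (η - φ) ≠ 0) := by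
  rw [mul_comm I (φ : ℂ), mul_comm I (η : ℂ), Complex.exp_mul_I, Complex.exp_mul_I] at hclosed
  have hre := congrArg Complex.re hclosed
  have him := congrArg Complex.im hclosed
  simp [Complex.add_re, Complex.add_im, Complex.mul_re, Complex.mul_im, Complex.cos_ofReal_re, Complex.sin_ofReal_re] at hre him
  rw [Real.sin_sub]
  have h1 : a * b * Real.sin φ + a * c * Real.sin η = 0 := by nlinarith [him]
  have e1 : (a + b * Real.cos φ + c * Real.cos η) * (c * Real.sin η) = 0 := by rw [hre]; ring
  have e2 : (b * Real.sin φ + c * Real.sin η) * (c * Real.cos η) = 0 := by rw [him]; ring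
  have h2 : a * c * Real.sin η + b * c * (Real.sin η * Real.cos φ - Real.cos η * Real.sin φ) = 0 := by
    linear_combination e1 - e2
  refine ⟨by linarith, by linarith, fun hs h => ?_⟩
  have h3 : a * b * Real.sin φ = 0 := by linarith
  have hab : a * b ≠ 0 := (mul_pos ha hb).ne'
  exact hs ((mul_eq_zero.mp h3).resolve_left hab)
end

section
/- Let a, b be positive real numbers and let (v₁, v₂, v₃, v₄) ∈ ℂ⁴ be a parallelogram configuration of the linkage Q(a,b,a,b), i.e., |v₂−v₁| = a, |v₃−v₂| = b, and v₂ − v₁ = v₃ − v₄. Then R(V) = ((v₂−v₁)/(v₃−v₂))². In particular |R(V)| = a²/b², and as the configuration varies over all parallelograms, R attains every value on the circle of radius a²/b² centered at 0 (each value being attained by two parallelogram shapes, i.e., the parallelogram circle is mapped 2:1 onto the image circle). -/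
-- No nondegeneracy is needed: for `v₃ = v₂` both sides are `0`, since `x / 0 = 0`.
theorem uniformizer_eq_sq_of_parallelogram {v₁ v₂ v₃ v₄ : ℂ} (h : v₂ - v₁ = v₃ - v₄) :
    uniformizer v₁ v₂ v₃ v₄ = ((v₂ - v₁) / (v₃ - v₂)) ^ 2 := by
  have h₄₃ : v₄ - v₃ = -(v₂ - v₁) := by linear_combination h
  have h₄₁ : v₄ - v₁ = v₃ - v₂ := by linear_combination h
  rw [uniformizer, h₄₃, h₄₁, ← neg_sub v₃ v₂, div_neg, neg_div, neg_mul_neg, sq]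

theorem div_sq_eq_sq_iff {K : Type*} [Field K] {c s u : K} (hc : c ≠ 0) (hs : s ≠ 0) :
    (c / u) ^ 2 = s ^ 2 ↔ u = c / s ∨ u = -(c / s) := by
  have key : ∀ t : K, t ≠ 0 → (c / u = t ↔ u = c / t) := fun t ht => by
    rcases eq_or_ne u 0 with rfl | hu
    · simp [hc, ht, eq_comm]
    · rw [div_eq_iff hu, eq_div_iff ht, mul_comm, eq_comm]
  rw [sq_eq_sq_iff_eq_or_eq_neg, key s hs, key (-s) (neg_ne_zero.mpr hs), div_neg]

theorem uniformizer_normalized_eq_sq_iff {c s z : ℂ} (hc : c ≠ 0) (hs : s ≠ 0) :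
    uniformizer 0 c z (z - c) = s ^ 2 ↔ z = c + c / s ∨ z = c - c / s := by
  rw [uniformizer_eq_sq_of_parallelogram (by ring), sub_zero, div_sq_eq_sq_iff hc hs,
    sub_eq_iff_eq_add', sub_eq_iff_eq_add', ← sub_eq_add_neg]

theorem stmt_18 (a b : ℝ) (ha : 0 < a) (hb : 0 < b) :
    (∀ v₁ v₂ v₃ v₄ : ℂ, ‖v₂ - v₁‖ = a → ‖v₃ - v₂‖ = b →
      v₂ - v₁ = v₃ - v₄ →
        uniformizer v₁ v₂ v₃ v₄ = ((v₂ - v₁) / (v₃ - v₂)) ^ 2 ∧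
        ‖uniformizer v₁ v₂ v₃ v₄‖ = a ^ 2 / b ^ 2) ∧
    (∀ w : ℂ, ‖w‖ = a ^ 2 / b ^ 2 →
      (∃ v₁ v₂ v₃ v₄ : ℂ, ‖v₂ - v₁‖ = a ∧ ‖v₃ - v₂‖ = b ∧
        v₂ - v₁ = v₃ - v₄ ∧ uniformizer v₁ v₂ v₃ v₄ = w) ∧
      Set.encard {z : ℂ | ‖z - (a : ℂ)‖ = b ∧
        uniformizer 0 (a : ℂ) z (z - (a : ℂ)) = w} = 2) := by
  refine ⟨fun v₁ v₂ v₃ v₄ h₁ h₂ hpar => ?_, fun w hw => ?_⟩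
  · have hR := uniformizer_eq_sq_of_parallelogram hpar
    exact ⟨hR, by rw [hR, norm_pow, norm_div, h₁, h₂, div_pow]⟩
  obtain ⟨s, rfl⟩ := IsAlgClosed.exists_pow_nat_eq w two_pos
  have haC : (a : ℂ) ≠ 0 := Complex.ofReal_ne_zero.mpr ha.ne'
  have hs_norm : ‖s‖ = a / b := by
    rw [norm_pow, ← div_pow] at hw
    exact (pow_left_inj₀ (norm_nonneg s) (by positivity) two_ne_zero).mp hw
  have hs : s ≠ 0 := norm_pos_iff.mp (hs_norm ▸ by positivity)
  have hr_norm : ‖(a : ℂ) / s‖ = b := by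
    rw [norm_div, hs_norm, Complex.norm_real, Real.norm_of_nonneg ha.le]
    field_simp
  have hset : {z : ℂ | ‖z - (a : ℂ)‖ = b ∧ uniformizer 0 (a : ℂ) z (z - (a : ℂ)) = s ^ 2} =
      {(a : ℂ) + a / s, (a : ℂ) - a / s} := by
    ext z
    simp only [Set.mem_ofPred_eq, Set.mem_insert_iff, Set.mem_singleton_iff,
      uniformizer_normalized_eq_sq_iff haC hs]
    refine ⟨And.right, fun hz => ⟨?_, hz⟩⟩
    rcases hz with rfl | rfl <;> simpa using hr_norm
  have hmem : (a : ℂ) + a / s ∈ {z : ℂ | ‖z - (a : ℂ)‖ = b ∧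
      uniformizer 0 (a : ℂ) z (z - (a : ℂ)) = s ^ 2} := hset ▸ Set.mem_insert _ _
  refine ⟨⟨0, a, a + a / s, a + a / s - a, by simpa using ha.le, hmem.1, by ring, hmem.2⟩, ?_⟩
  rw [hset, Set.encard_pair]
  intro h
  exact div_ne_zero haC hs (by linear_combination h / 2)
end

section
/- Let a, b be positive real numbers and let (v₁, v₂, v₃, v₄) ∈ ℂ⁴ be a configuration of the linkage Q(a,b,a,b), i.e., |v₂−v₁| = |v₄−v₃| = a and |v₃−v₂| = |v₄−v₁| = b, which is not a parallelogram, i.e., v₁ + v₃ ≠ v₂ + v₄ (a counter-parallelogram configuration). Then R(V) = a²/b²; that is, the uniformizer is constant on the counter-parallelogram component, which collapses to the single point a²/b² on the positive real axis. -/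
namespace Complex

open ComplexConjugate

theorem sq_norm_mul_add_eq_mul_mul_conj {z w : ℂ} (h : ‖z‖ = ‖w‖) :
    (‖z‖ ^ 2 : ℂ) * (z + w) = z * w * conj (z + w) := by
  have hz : (‖z‖ ^ 2 : ℂ) = z * conj z := by rw [mul_conj, normSq_eq_norm_sq]; push_cast; ring
  have hw : (‖z‖ ^ 2 : ℂ) = w * conj w := by rw [h, mul_conj, normSq_eq_norm_sq]; push_cast; ring
  rw [map_add]
  linear_combination w * hz + z * hw

theorem sq_norm_mul_mul_eq_of_add_eq_zero {e₁ e₂ e₃ e₄ : ℂ} (hsum : e₁ + e₂ + e₃ + e₄ = 0)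
    (h₁₃ : ‖e₁‖ = ‖e₃‖) (h₂₄ : ‖e₂‖ = ‖e₄‖) (hne : e₁ + e₃ ≠ 0) :
    (‖e₁‖ ^ 2 : ℂ) * (e₂ * e₄) = ‖e₂‖ ^ 2 * (e₁ * e₃) := by
  have h₁ := sq_norm_mul_add_eq_mul_mul_conj h₁₃
  have h₂ := sq_norm_mul_add_eq_mul_mul_conj h₂₄
  have hconj : conj (e₁ + e₃) = -conj (e₂ + e₄) := by
    rw [← map_neg]; congr 1; linear_combination hsum
  have hprod : (e₁ + e₃) * ((‖e₁‖ ^ 2 : ℂ) * (e₂ * e₄) - ‖e₂‖ ^ 2 * (e₁ * e₃)) = 0 := by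
    linear_combination e₂ * e₄ * h₁ + e₁ * e₃ * h₂ + e₁ * e₂ * e₃ * e₄ * hconj
      - ‖e₂‖ ^ 2 * e₁ * e₃ * hsum
  exact sub_eq_zero.mp ((mul_eq_zero.mp hprod).resolve_left hne)

end Complex

theorem stmt_19_general (a b : ℝ) (hb : 0 < b) (v₁ v₂ v₃ v₄ : ℂ)
    (h₁ : ‖v₂ - v₁‖ = a) (h₂ : ‖v₃ - v₂‖ = b)
    (h₃ : ‖v₄ - v₃‖ = a) (h₄ : ‖v₁ - v₄‖ = b)
    (hnp : v₁ + v₃ ≠ v₂ + v₄) :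
    uniformizer v₁ v₂ v₃ v₄ = ((a ^ 2 / b ^ 2 : ℝ) : ℂ) := by
  have hv₂₃ : v₂ - v₃ ≠ 0 := by
    rw [← norm_ne_zero_iff, norm_sub_rev, h₂]; exact hb.ne'
  have hv₄₁ : v₄ - v₁ ≠ 0 := by
    rw [← norm_ne_zero_iff, norm_sub_rev, h₄]; exact hb.ne'
  have hb₀ : (b : ℂ) ≠ 0 := by exact_mod_cast hb.ne'
  have hedges := Complex.sq_norm_mul_mul_eq_of_add_eq_zero (e₁ := v₂ - v₁) (e₂ := v₃ - v₂)
    (e₃ := v₄ - v₃) (e₄ := v₁ - v₄) (by ring) (h₁.trans h₃.symm) (h₂.trans h₄.symm)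
    (fun h => hnp (by linear_combination -h))
  rw [h₁, h₂] at hedges
  unfold uniformizer
  push_cast
  field_simp
  linear_combination -hedges

theorem stmt_19 (a b : ℝ) (ha : 0 < a) (hb : 0 < b) (v₁ v₂ v₃ v₄ : ℂ)
    (h₁ : ‖v₂ - v₁‖ = a) (h₂ : ‖v₃ - v₂‖ = b)
    (h₃ : ‖v₄ - v₃‖ = a) (h₄ : ‖v₁ - v₄‖ = b)
    (hnp : v₁ + v₃ ≠ v₂ + v₄) :
    uniformizer v₁ v₂ v₃ v₄ = ((a ^ 2 / b ^ 2 : ℝ) : ℂ) :=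
  stmt_19_general a b hb v₁ v₂ v₃ v₄ h₁ h₂ h₃ h₄ hnp
end
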